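/- arXiv:1607.01461 — 6 statements merged into one kernel-verified Lean document; each statement's English description precedes it below -/
import Mathlib

section
/- For a scalar Gaussian input X ~ N(0,1) observed through Y = √snr·X + Z with Z ~ N(0,1) independent of X, and for any p ≥ 1, the minimum mean p-th error satisfies mmpe(X, snr, p) = inf_f E[|X - f(Y)|^p] = E[|Z|^p] / (1+snr)^{p/2}, and the infimum is achieved by the linear estimator f(y) = (√snr/(1+snr)) y. -/
/-!
With `k = √snr / (1 + snr)` the error of the linear estimator is
`X - k Y = X / (1 + snr) - k Z`, a centred Gaussian of variance `1 / (1 + snr)`; inside the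
Gaussian vector `(X, Z)` it is uncorrelated with `Y`, hence independent of `Y`. Any other
estimator has error `(X - k Y) - g(Y)` with `g(y) = f(y) - k y`. Conditionally on `Y` this is
a symmetric variable shifted by a constant `c`, and averaging the convexity bound
`‖e‖^p ≤ (‖e - c‖^p + ‖e + c‖^p) / 2` over the symmetric law shows that the shift can only
increase the `p`-th moment.
-/

open MeasureTheory ProbabilityTheory
open scoped ENNReal NNReal

section SymmetricLaw

variable {E : Type*} [NormedAddCommGroup E] [NormedSpace ℝ E]

lemma enorm_rpow_le_mean_enorm_sub_add_rpow {p : ℝ} (hp : 1 ≤ p) (x c : E) :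
    ‖x‖ₑ ^ p ≤ 2⁻¹ * ‖x - c‖ₑ ^ p + 2⁻¹ * ‖x + c‖ₑ ^ p := by
  have hmid : ‖x‖ₑ ≤ 2⁻¹ * ‖x - c‖ₑ + 2⁻¹ * ‖x + c‖ₑ := by
    have hx : x = (2⁻¹ : ℝ) • (x - c) + (2⁻¹ : ℝ) • (x + c) := by module
    calc ‖x‖ₑ = ‖(2⁻¹ : ℝ) • (x - c) + (2⁻¹ : ℝ) • (x + c)‖ₑ := congrArg _ hx
      _ ≤ ‖(2⁻¹ : ℝ) • (x - c)‖ₑ + ‖(2⁻¹ : ℝ) • (x + c)‖ₑ := enorm_add_le _ _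
      _ = 2⁻¹ * ‖x - c‖ₑ + 2⁻¹ * ‖x + c‖ₑ := by
        rw [enorm_smul, enorm_smul, enorm_inv two_ne_zero, Real.enorm_eq_ofReal zero_le_two,
          ENNReal.ofReal_ofNat]
  calc ‖x‖ₑ ^ p ≤ (2⁻¹ * ‖x - c‖ₑ + 2⁻¹ * ‖x + c‖ₑ) ^ p :=
        ENNReal.rpow_le_rpow hmid (by linarith)
    _ ≤ 2⁻¹ * ‖x - c‖ₑ ^ p + 2⁻¹ * ‖x + c‖ₑ ^ p :=
        ENNReal.rpow_arith_mean_le_arith_mean2_rpow _ _ _ _ ENNReal.inv_two_add_inv_two hp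

variable [MeasurableSpace E] [BorelSpace E]

lemma lintegral_enorm_rpow_le_lintegral_enorm_sub_rpow {ν : Measure E} [ν.IsNegInvariant]
    {p : ℝ} (hp : 1 ≤ p) (c : E) :
    ∫⁻ x, ‖x‖ₑ ^ p ∂ν ≤ ∫⁻ x, ‖x - c‖ₑ ^ p ∂ν := by
  have hreflect : ∫⁻ x, ‖x + c‖ₑ ^ p ∂ν = ∫⁻ x, ‖x - c‖ₑ ^ p ∂ν := by
    rw [← lintegral_neg_eq_self]
    simp_rw [← enorm_neg (-_ + c), neg_add, neg_neg, ← sub_eq_add_neg]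
  calc ∫⁻ x, ‖x‖ₑ ^ p ∂ν ≤ ∫⁻ x, 2⁻¹ * ‖x - c‖ₑ ^ p + 2⁻¹ * ‖x + c‖ₑ ^ p ∂ν :=
        lintegral_mono fun x ↦ enorm_rpow_le_mean_enorm_sub_add_rpow hp x c
    _ = 2⁻¹ * ∫⁻ x, ‖x - c‖ₑ ^ p ∂ν + 2⁻¹ * ∫⁻ x, ‖x + c‖ₑ ^ p ∂ν := by
        rw [lintegral_add_left (by fun_prop), lintegral_const_mul _ (by fun_prop),
          lintegral_const_mul _ (by fun_prop)]
    _ = ∫⁻ x, ‖x - c‖ₑ ^ p ∂ν := by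
        rw [hreflect, ← add_mul, ENNReal.inv_two_add_inv_two, one_mul]

end SymmetricLaw

instance gaussianReal_isNegInvariant (v : ℝ≥0) : (gaussianReal 0 v).IsNegInvariant :=
  ⟨by rw [Measure.neg_def]; simpa using gaussianReal_map_neg (μ := 0) (v := v)⟩

lemma lintegral_enorm_rpow_gaussianReal {p : ℝ} (hp : 0 ≤ p) (v : ℝ≥0) :
    ∫⁻ x, ‖x‖ₑ ^ p ∂gaussianReal 0 v
      = ENNReal.ofReal ((v : ℝ) ^ (p / 2) * ∫ z, |z| ^ p ∂gaussianReal 0 1) := by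
  have hscale : (gaussianReal 0 1).map (fun z ↦ √(v : ℝ) * z) = gaussianReal 0 v := by
    rw [gaussianReal_map_const_mul]
    congr 1
    · simp
    · ext; simp
  have hmoment : ∫⁻ z, ‖z‖ₑ ^ p ∂gaussianReal 0 1
      = ENNReal.ofReal (∫ z, |z| ^ p ∂gaussianReal 0 1) := by
    have hint : Integrable (fun z : ℝ ↦ |z| ^ p) (gaussianReal 0 1) := by
      simpa [ENNReal.toReal_ofReal hp] using (memLp_id_gaussianReal' (μ := 0) (v := 1)
        (ENNReal.ofReal p) ENNReal.ofReal_ne_top).integrable_norm_rpow'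
    rw [ofReal_integral_eq_lintegral_ofReal hint (ae_of_all _ fun z ↦ by positivity)]
    simp_rw [Real.enorm_eq_ofReal_abs, ENNReal.ofReal_rpow_of_nonneg (abs_nonneg _) hp]
  rw [← hscale, lintegral_map (by fun_prop) (by fun_prop)]
  simp_rw [enorm_mul, ENNReal.mul_rpow_of_nonneg _ _ hp]
  rw [lintegral_const_mul _ (by fun_prop), hmoment, Real.enorm_eq_ofReal_abs,
    ENNReal.ofReal_rpow_of_nonneg (abs_nonneg _) hp, ← ENNReal.ofReal_mul (by positivity),
    abs_of_nonneg (Real.sqrt_nonneg _), Real.sqrt_eq_rpow, ← Real.rpow_mul (NNReal.coe_nonneg v),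
    one_div_mul_eq_div]

lemma lintegral_enorm_rpow_le_of_indepFun {Ω E β : Type*} [MeasurableSpace Ω] {P : Measure Ω}
    [IsProbabilityMeasure P] [NormedAddCommGroup E] [NormedSpace ℝ E] [MeasurableSpace E]
    [BorelSpace E] [SecondCountableTopology E] [MeasurableSpace β]
    {ν : Measure E} [ν.IsNegInvariant] {W : Ω → E} {Y : Ω → β} (hW : HasLaw W ν P)
    (hY : Measurable Y) (hWY : IndepFun W Y P) {g : β → E} (hg : Measurable g)
    {p : ℝ} (hp : 1 ≤ p) :
    ∫⁻ ω, ‖W ω‖ₑ ^ p ∂P ≤ ∫⁻ ω, ‖W ω - g (Y ω)‖ₑ ^ p ∂P := by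
  have hjoint := hWY.hasLaw_prod hW (HasLaw.mk hY.aemeasurable rfl)
  have : IsProbabilityMeasure ν := hW.isProbabilityMeasure_iff.mp inferInstance
  have : IsProbabilityMeasure (P.map Y) := Measure.isProbabilityMeasure_map hY.aemeasurable
  calc ∫⁻ ω, ‖W ω‖ₑ ^ p ∂P = ∫⁻ x, ‖x‖ₑ ^ p ∂ν :=
        hW.lintegral_comp (f := fun x ↦ ‖x‖ₑ ^ p) (by fun_prop)
    _ = ∫⁻ y, ∫⁻ x, ‖x‖ₑ ^ p ∂ν ∂(P.map Y) := by
        rw [lintegral_const, measure_univ, mul_one]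
    _ ≤ ∫⁻ y, ∫⁻ x, ‖x - g y‖ₑ ^ p ∂ν ∂(P.map Y) :=
        lintegral_mono fun y ↦ lintegral_enorm_rpow_le_lintegral_enorm_sub_rpow hp (g y)
    _ = ∫⁻ z, ‖z.1 - g z.2‖ₑ ^ p ∂(ν.prod (P.map Y)) :=
        (lintegral_prod_symm (fun z ↦ ‖z.1 - g z.2‖ₑ ^ p) (by fun_prop)).symm
    _ = ∫⁻ ω, ‖W ω - g (Y ω)‖ₑ ^ p ∂P :=
        (hjoint.lintegral_comp (f := fun z ↦ ‖z.1 - g z.2‖ₑ ^ p) (by fun_prop)).symm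

section StandardGaussianPair

variable {Ω : Type*} [MeasurableSpace Ω] {P : Measure Ω} {X Z : Ω → ℝ}

lemma hasGaussianLaw_linear_pair (hX : HasLaw X (gaussianReal 0 1) P)
    (hZ : HasLaw Z (gaussianReal 0 1) P) (hXZ : IndepFun X Z P) (a b c d : ℝ) :
    HasGaussianLaw (fun ω ↦ (a * X ω + b * Z ω, c * X ω + d * Z ω)) P := by
  have hpair : HasGaussianLaw (fun ω ↦ (X ω, Z ω)) P :=
    hXZ.hasGaussianLaw hX.hasGaussianLaw hZ.hasGaussianLaw
  let L : ℝ × ℝ →L[ℝ] ℝ × ℝ :=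
    (a • ContinuousLinearMap.fst ℝ ℝ ℝ + b • ContinuousLinearMap.snd ℝ ℝ ℝ).prod
      (c • ContinuousLinearMap.fst ℝ ℝ ℝ + d • ContinuousLinearMap.snd ℝ ℝ ℝ)
  exact hpair.map_fun L

lemma covariance_linear_pair [IsProbabilityMeasure P] (hX : HasLaw X (gaussianReal 0 1) P)
    (hZ : HasLaw Z (gaussianReal 0 1) P) (hXZ : IndepFun X Z P) (a b c d : ℝ) :
    cov[fun ω ↦ a * X ω + b * Z ω, fun ω ↦ c * X ω + d * Z ω; P] = a * c + b * d := by
  have hX2 : MemLp X 2 P := hX.hasGaussianLaw.memLp_two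
  have hZ2 : MemLp Z 2 P := hZ.hasGaussianLaw.memLp_two
  have hvarX : cov[X, X; P] = 1 := by
    rw [covariance_self hX.aemeasurable, hX.variance_eq, variance_id_gaussianReal]; rfl
  have hvarZ : cov[Z, Z; P] = 1 := by
    rw [covariance_self hZ.aemeasurable, hZ.variance_eq, variance_id_gaussianReal]; rfl
  have hcov : cov[X, Z; P] = 0 := hXZ.covariance_eq_zero hX2 hZ2
  have hsplit : ∀ s t : ℝ, (fun ω ↦ s * X ω + t * Z ω)
      = (fun ω ↦ s * X ω) + fun ω ↦ t * Z ω := fun _ _ ↦ rfl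
  rw [hsplit, hsplit, covariance_add_left (hX2.const_mul _) (hZ2.const_mul _)
      ((hX2.const_mul _).add (hZ2.const_mul _)),
    covariance_add_right (hX2.const_mul _) (hX2.const_mul _) (hZ2.const_mul _),
    covariance_add_right (hZ2.const_mul _) (hX2.const_mul _) (hZ2.const_mul _)]
  simp only [covariance_const_mul_left, covariance_const_mul_right, hvarX, hvarZ, hcov,
    covariance_comm Z X]
  ring

lemma hasLaw_linear_combination [IsProbabilityMeasure P] (hX : HasLaw X (gaussianReal 0 1) P)
    (hZ : HasLaw Z (gaussianReal 0 1) P) (hXZ : IndepFun X Z P) (a b : ℝ) :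
    HasLaw (fun ω ↦ a * X ω + b * Z ω) (gaussianReal 0 (a ^ 2 + b ^ 2).toNNReal) P := by
  have hgauss := (hasGaussianLaw_linear_pair hX hZ hXZ a b a b).fst
  refine ⟨hgauss.aemeasurable, ?_⟩
  rw [hgauss.map_eq_gaussianReal, ← covariance_self hgauss.aemeasurable,
    covariance_linear_pair hX hZ hXZ, integral_add (hX.hasGaussianLaw.integrable.const_mul _)
      (hZ.hasGaussianLaw.integrable.const_mul _), integral_const_mul, integral_const_mul,
    hX.integral_eq, hZ.integral_eq, integral_id_gaussianReal]
  congr 1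
  · simp
  · rw [sq, sq]

lemma indepFun_linear_pair [IsProbabilityMeasure P] (hX : HasLaw X (gaussianReal 0 1) P)
    (hZ : HasLaw Z (gaussianReal 0 1) P) (hXZ : IndepFun X Z P) {a b c d : ℝ}
    (horth : a * c + b * d = 0) :
    IndepFun (fun ω ↦ a * X ω + b * Z ω) (fun ω ↦ c * X ω + d * Z ω) P :=
  (hasGaussianLaw_linear_pair hX hZ hXZ a b c d).indepFun_of_covariance_eq_zero
    ((covariance_linear_pair hX hZ hXZ a b c d).trans horth)

end StandardGaussianPair

/-- **MMPE of a scalar Gaussian input.**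
For `X ~ N(0,1)` observed through `Y = √snr·X + Z` with `Z ~ N(0,1)` independent of
`X`, and any `p ≥ 1`, the minimum mean `p`-th error
`mmpe(X, snr, p) = inf_f E[|X - f(Y)|^p]` equals `E[|Z|^p] / (1+snr)^(p/2)`, and the
infimum is achieved by the linear estimator `f(y) = (√snr/(1+snr)) y`. -/
theorem mmpe_gaussian_input
    {Ω : Type*} [MeasurableSpace Ω] (μ : Measure Ω) [IsProbabilityMeasure μ]
    (X Z : Ω → ℝ) (hX : Measurable X) (hZ : Measurable Z)
    (hXlaw : μ.map X = gaussianReal 0 1) (hZlaw : μ.map Z = gaussianReal 0 1)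
    (hindep : IndepFun X Z μ)
    (snr : ℝ) (hsnr : 0 < snr) (p : ℝ) (hp : 1 ≤ p)
    (Y : Ω → ℝ) (hY : Y = fun ω => Real.sqrt snr * X ω + Z ω) :
    (⨅ f : {f : ℝ → ℝ // Measurable f},
        ∫⁻ ω, (‖X ω - f.1 (Y ω)‖₊ : ENNReal) ^ p ∂μ)
      = ENNReal.ofReal ((∫ z, |z| ^ p ∂(gaussianReal 0 1)) / (1 + snr) ^ (p / 2)) ∧
    (∫⁻ ω, (‖X ω - (Real.sqrt snr / (1 + snr)) * Y ω‖₊ : ENNReal) ^ p ∂μ)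
      = ENNReal.ofReal ((∫ z, |z| ^ p ∂(gaussianReal 0 1)) / (1 + snr) ^ (p / 2)) := by
  simp only [← enorm_eq_nnnorm]
  set k := √snr / (1 + snr)
  have hsnr1 : 0 < 1 + snr := by linarith
  have hsq : √snr ^ 2 = snr := Real.sq_sqrt hsnr.le
  have hXg : HasLaw X (gaussianReal 0 1) μ := ⟨hX.aemeasurable, hXlaw⟩
  have hZg : HasLaw Z (gaussianReal 0 1) μ := ⟨hZ.aemeasurable, hZlaw⟩
  have hYlin : Y = fun ω ↦ √snr * X ω + 1 * Z ω := by simp [hY]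
  have herr : (fun ω ↦ X ω - k * Y ω) = fun ω ↦ (1 + snr)⁻¹ * X ω + (-k) * Z ω := by
    funext ω
    simp only [hY, k]
    field_simp
    linear_combination (-X ω) * hsq
  have herrLaw : HasLaw (fun ω ↦ X ω - k * Y ω) (gaussianReal 0 (1 + snr)⁻¹.toNNReal) μ := by
    convert hasLaw_linear_combination hXg hZg hindep (1 + snr)⁻¹ (-k) using 3
    simp only [k]
    field_simp
    rw [hsq]
  have herrIndep : IndepFun (fun ω ↦ X ω - k * Y ω) Y μ := by
    rw [herr, hYlin]
    exact indepFun_linear_pair hXg hZg hindep (by simp only [k]; field_simp; ring)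
  have hvalue : ∫⁻ ω, ‖X ω - k * Y ω‖ₑ ^ p ∂μ
      = ENNReal.ofReal ((∫ z, |z| ^ p ∂(gaussianReal 0 1)) / (1 + snr) ^ (p / 2)) := by
    rw [herrLaw.lintegral_comp (f := fun x ↦ ‖x‖ₑ ^ p) (by fun_prop),
      lintegral_enorm_rpow_gaussianReal (by linarith), Real.coe_toNNReal _ (by positivity),
      Real.inv_rpow hsnr1.le, inv_mul_eq_div]
  have hlower : ∀ f : {f : ℝ → ℝ // Measurable f},
      ∫⁻ ω, ‖X ω - k * Y ω‖ₑ ^ p ∂μ ≤ ∫⁻ ω, ‖X ω - f.1 (Y ω)‖ₑ ^ p ∂μ := fun ⟨f, hf⟩ ↦ by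
    simpa using lintegral_enorm_rpow_le_of_indepFun herrLaw (by rw [hY]; fun_prop) herrIndep
      (g := fun y ↦ f y - k * y) (by fun_prop) hp
  refine ⟨le_antisymm ?_ (hvalue ▸ le_iInf hlower), hvalue⟩
  exact (iInf_le _ ⟨(k * ·), by fun_prop⟩).trans hvalue.le
end

section
/- Higher-moment conditional-expectation error bound: for the channel Y = √snr·X + Z with Z standard normal independent of X, snr > 0, and p ≥ 2, E[|X - E[X|Y]|^p] ≤ 2^p E[|Z|^p] / snr^{p/2}. -/
/-!
Since `Y = a • X + Z` is `σ(Y)`-measurable, `a • (X - E[X | Y]) = E[Z | Y] - Z` almost surely.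
Conditional expectation is a contraction in `Lᵖ` for `p ≥ 1` (conditional Jensen), so Minkowski
gives `‖E[Z | Y] - Z‖ₚ ≤ 2 ‖Z‖ₚ`; raising to the `p`-th power and dividing by `aᵖ = snr^(p/2)`
gives the bound.
-/

open MeasureTheory ProbabilityTheory
open scoped ENNReal

namespace MeasureTheory

variable {α : Type*} {m m0 : MeasurableSpace α} {μ : Measure α}

theorem MemLp.lpNorm_condExp_sub_le_two_mul {E : Type*} [NormedAddCommGroup E] [NormedSpace ℝ E]
    [CompleteSpace E] {f : α → E} {p : ℝ≥0∞} (hp : 1 ≤ p) (hf : MemLp f p μ) :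
    lpNorm (μ[f | m] - f) p μ ≤ 2 * lpNorm f p μ :=
  calc lpNorm (μ[f | m] - f) p μ ≤ lpNorm μ[f | m] p μ + lpNorm f p μ :=
        lpNorm_sub_le (hf.condExp hp) hp
    _ ≤ lpNorm f p μ + lpNorm f p μ := by gcongr; exact hf.lpNorm_condExp_le_lpNorm hp
    _ = 2 * lpNorm f p μ := by ring

theorem integral_abs_rpow_eq_lpNorm_rpow {f : α → ℝ} {p : ℝ} (hp : 0 < p)
    (hf : AEStronglyMeasurable f μ) :
    ∫ x, |f x| ^ p ∂μ = lpNorm f (.ofReal p) μ ^ p := by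
  have hint : 0 ≤ ∫ x, |f x| ^ p ∂μ := integral_nonneg fun x => by positivity
  rw [lpNorm_eq_integral_norm_rpow_toReal (by simpa using hp) ENNReal.ofReal_ne_top hf,
    ENNReal.toReal_ofReal hp.le]
  simp only [Real.norm_eq_abs]
  rw [← Real.rpow_mul hint, inv_mul_cancel₀ hp.ne', Real.rpow_one]

theorem MemLp.integral_abs_condExp_sub_rpow_le {f : α → ℝ} {p : ℝ} (hp : 1 ≤ p)
    (hf : MemLp f (.ofReal p) μ) :
    ∫ x, |μ[f | m] x - f x| ^ p ∂μ ≤ 2 ^ p * ∫ x, |f x| ^ p ∂μ := by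
  have hp0 : 0 < p := zero_lt_one.trans_le hp
  have hp1 : 1 ≤ ENNReal.ofReal p := by simpa using hp
  calc ∫ x, |μ[f | m] x - f x| ^ p ∂μ = lpNorm (μ[f | m] - f) (.ofReal p) μ ^ p :=
        integral_abs_rpow_eq_lpNorm_rpow hp0 (integrable_condExp.aestronglyMeasurable.sub hf.1)
    _ ≤ (2 * lpNorm f (.ofReal p) μ) ^ p :=
        Real.rpow_le_rpow lpNorm_nonneg (hf.lpNorm_condExp_sub_le_two_mul hp1) hp0.le
    _ = 2 ^ p * ∫ x, |f x| ^ p ∂μ := by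
        rw [Real.mul_rpow zero_le_two lpNorm_nonneg, integral_abs_rpow_eq_lpNorm_rpow hp0 hf.1]

theorem smul_sub_condExp_ae_eq_condExp_sub [IsFiniteMeasure μ] (hm : m ≤ m0) {X Z : α → ℝ}
    {a : ℝ} (hX : Integrable X μ) (hZ : Integrable Z μ) (hY : StronglyMeasurable[m] (a • X + Z)) :
    a • (X - μ[X | m]) =ᵐ[μ] μ[Z | m] - Z := by
  have hY_int : Integrable (a • X + Z) μ := (hX.smul a).add hZ
  have hcond : μ[a • X | m] =ᵐ[μ] (a • X + Z) - μ[Z | m] := by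
    simpa only [add_sub_cancel_right, condExp_of_stronglyMeasurable hm hY hY_int]
      using condExp_sub hY_int hZ m
  filter_upwards [hcond, condExp_smul a X m] with ω h1 h2
  simp only [Pi.smul_apply, Pi.sub_apply, Pi.add_apply, smul_eq_mul] at h1 h2 ⊢
  linarith

theorem integral_abs_sub_condExp_rpow_le_of_stronglyMeasurable_smul_add [IsFiniteMeasure μ]
    (hm : m ≤ m0) {X Z : α → ℝ} {a p : ℝ} (ha : 0 < a) (hp : 1 ≤ p) (hX : Integrable X μ)
    (hZ : MemLp Z (.ofReal p) μ) (hY : StronglyMeasurable[m] (a • X + Z)) :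
    ∫ ω, |X ω - μ[X | m] ω| ^ p ∂μ ≤ 2 ^ p * (∫ ω, |Z ω| ^ p ∂μ) / a ^ p := by
  have hZ_int : Integrable Z μ := hZ.integrable (by simpa using hp)
  have hdiff : ∀ᵐ ω ∂μ, |X ω - μ[X | m] ω| ^ p = |μ[Z | m] ω - Z ω| ^ p / a ^ p := by
    filter_upwards [smul_sub_condExp_ae_eq_condExp_sub hm hX hZ_int hY] with ω hω
    simp only [Pi.smul_apply, Pi.sub_apply, smul_eq_mul] at hω
    rw [← hω, abs_mul, abs_of_pos ha, Real.mul_rpow ha.le (abs_nonneg _),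
      mul_div_cancel_left₀ _ (Real.rpow_pos_of_pos ha p).ne']
  calc ∫ ω, |X ω - μ[X | m] ω| ^ p ∂μ = (∫ ω, |μ[Z | m] ω - Z ω| ^ p ∂μ) / a ^ p := by
        rw [integral_congr_ae hdiff, integral_div]
    _ ≤ 2 ^ p * (∫ ω, |Z ω| ^ p ∂μ) / a ^ p := by
        gcongr; exact hZ.integral_abs_condExp_sub_rpow_le hp

end MeasureTheory

theorem condexp_error_higher_moment_bound_general
    {Ω : Type*} [MeasurableSpace Ω] (μ : Measure Ω) [IsProbabilityMeasure μ]
    (X Z : Ω → ℝ) (hX : Measurable X) (hZ : Measurable Z)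
    (hX2 : MemLp X 2 μ)
    (hZlaw : μ.map Z = gaussianReal 0 1)
    (snr : ℝ) (hsnr : 0 < snr) (p : ℝ) (hp : 2 ≤ p)
    (Y : Ω → ℝ) (hY : Y = fun ω => Real.sqrt snr * X ω + Z ω) :
    ∫ ω, |X ω - (μ[X | MeasurableSpace.comap Y (borel ℝ)]) ω| ^ p ∂μ
      ≤ 2 ^ p * (∫ z, |z| ^ p ∂(gaussianReal 0 1)) / snr ^ (p / 2) := by
  have hYmeas : Measurable Y := hY ▸ (hX.const_mul _).add hZ
  have hYm : StronglyMeasurable[MeasurableSpace.comap Y (borel ℝ)] (Real.sqrt snr • X + Z) :=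
    hY ▸ (comap_measurable Y).stronglyMeasurable
  have hZp : MemLp Z (.ofReal p) μ :=
    (memLp_map_measure_iff aestronglyMeasurable_id hZ.aemeasurable).1
      (hZlaw ▸ memLp_id_gaussianReal' _ ENNReal.ofReal_ne_top)
  have hZ_moment : ∫ ω, |Z ω| ^ p ∂μ = ∫ z, |z| ^ p ∂(gaussianReal 0 1) := by
    rw [← hZlaw, integral_map hZ.aemeasurable
      (continuous_abs.rpow_const fun _ => Or.inr (by linarith)).aestronglyMeasurable]
  rw [Real.rpow_div_two_eq_sqrt p hsnr.le, ← hZ_moment]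
  exact integral_abs_sub_condExp_rpow_le_of_stronglyMeasurable_smul_add hYmeas.comap_le
    (Real.sqrt_pos.2 hsnr) (by linarith) (hX2.integrable one_le_two) hZp hYm

/-- **Higher-moment bound on the conditional-expectation error.**
For `Y = √snr·X + Z` with `Z ~ N(0,1)` independent of `X`, `E[X²] < ∞`, `snr > 0`
and `p ≥ 2`: `E[|X - E[X|Y]|^p] ≤ 2^p E[|Z|^p] / snr^(p/2)`. -/
theorem condexp_error_higher_moment_bound
    {Ω : Type*} [MeasurableSpace Ω] (μ : Measure Ω) [IsProbabilityMeasure μ]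
    (X Z : Ω → ℝ) (hX : Measurable X) (hZ : Measurable Z)
    (hX2 : MemLp X 2 μ)
    (hZlaw : μ.map Z = gaussianReal 0 1) (hindep : IndepFun X Z μ)
    (snr : ℝ) (hsnr : 0 < snr) (p : ℝ) (hp : 2 ≤ p)
    (Y : Ω → ℝ) (hY : Y = fun ω => Real.sqrt snr * X ω + Z ω) :
    ∫ ω, |X ω - (μ[X | MeasurableSpace.comap Y (borel ℝ)]) ω| ^ p ∂μ
      ≤ 2 ^ p * (∫ z, |z| ^ p ∂(gaussianReal 0 1)) / snr ^ (p / 2) :=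
  condexp_error_higher_moment_bound_general μ X Z hX hZ hX2 hZlaw snr hsnr p hp Y hY
end

section
/- Gaussian inputs are asymptotically hardest to estimate: if X is a real random variable with E[|X|^p] ≤ σ^p E[|Z|^p] for Z ~ N(0,1) and p ≥ 1, then for all snr ≥ 0, mmpe(X, snr, p) ≤ ((1 + σ√snr)/√(1 + σ² snr))^p · σ^p E[|Z|^p] / (1 + snr σ²)^{p/2}. -/
/-!
Use the linear estimator `f y = a y` with `a = σ²√snr / (1 + σ²snr)`, the Gaussian-optimal
coefficient. Its error is `X / (1 + σ²snr) - a Z`, so Minkowski's inequality in `Lᵖ` and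
`‖X‖ₚ ≤ σ ‖Z‖ₚ` bound its `Lᵖ` norm by
`(σ / (1 + σ²snr) + a) ‖Z‖ₚ = σ (1 + σ√snr) / (1 + σ²snr) · ‖Z‖ₚ`;
raising to the power `p` gives the claim.
-/

open MeasureTheory ProbabilityTheory

open scoped ENNReal NNReal

section LpSeminorm

variable {α : Type*} [MeasurableSpace α] {μ : Measure α}

lemma lintegral_enorm_rpow_eq_ofReal_integral {f : α → ℝ} {q : ℝ} (hq : 0 ≤ q)
    (hf : Integrable (fun x => |f x| ^ q) μ) :
    ∫⁻ x, ‖f x‖ₑ ^ q ∂μ = ENNReal.ofReal (∫ x, |f x| ^ q ∂μ) := by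
  rw [ofReal_integral_eq_lintegral_ofReal hf (ae_of_all _ fun x => by positivity)]
  refine lintegral_congr fun x => ?_
  rw [Real.enorm_eq_ofReal_abs, ENNReal.ofReal_rpow_of_nonneg (abs_nonneg _) hq]

lemma eLpNorm'_eq_ofReal_integral_rpow {f : α → ℝ} {q : ℝ} (hq : 0 < q)
    (hf : Integrable (fun x => |f x| ^ q) μ) :
    eLpNorm' f q μ = ENNReal.ofReal ((∫ x, |f x| ^ q ∂μ) ^ (1 / q)) := by
  rw [eLpNorm'_eq_lintegral_enorm, lintegral_enorm_rpow_eq_ofReal_integral hq.le hf,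
    ENNReal.ofReal_rpow_of_nonneg (integral_nonneg fun x => by positivity) (by positivity)]

lemma eLpNorm'_le_of_integral_rpow_le {f : α → ℝ} {q σ M : ℝ} (hq : 0 < q) (hσ : 0 ≤ σ)
    (hM : 0 ≤ M) (hf : Integrable (fun x => |f x| ^ q) μ)
    (hmom : ∫ x, |f x| ^ q ∂μ ≤ σ ^ q * M) :
    eLpNorm' f q μ ≤ ENNReal.ofReal (σ * M ^ (1 / q)) := by
  rw [eLpNorm'_eq_ofReal_integral_rpow hq hf]
  refine ENNReal.ofReal_le_ofReal ?_
  calc (∫ x, |f x| ^ q ∂μ) ^ (1 / q)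
      ≤ (σ ^ q * M) ^ (1 / q) :=
        Real.rpow_le_rpow (integral_nonneg fun x => by positivity) hmom (by positivity)
    _ = σ * M ^ (1 / q) := by
        rw [Real.mul_rpow (by positivity) hM, ← Real.rpow_mul hσ, mul_one_div_cancel hq.ne',
          Real.rpow_one]

lemma eLpNorm'_sub_mul_add_le {X Z : α → ℝ} (hX : AEStronglyMeasurable X μ)
    (hZ : AEStronglyMeasurable Z μ) {q : ℝ} (hq : 1 ≤ q) (s a : ℝ) :
    eLpNorm' (fun x => X x - a * (s * X x + Z x)) q μ
      ≤ ‖1 - a * s‖ₑ * eLpNorm' X q μ + ‖a‖ₑ * eLpNorm' Z q μ := by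
  have hsplit : (fun x => X x - a * (s * X x + Z x)) = (1 - a * s) • X + (-a) • Z := by
    ext x
    simp only [Pi.add_apply, Pi.smul_apply, smul_eq_mul]
    ring
  calc eLpNorm' (fun x => X x - a * (s * X x + Z x)) q μ
      ≤ eLpNorm' ((1 - a * s) • X) q μ + eLpNorm' ((-a) • Z) q μ := by
        rw [hsplit]
        exact eLpNorm'_add_le (hX.const_smul _) (hZ.const_smul _) hq
    _ = ‖1 - a * s‖ₑ * eLpNorm' X q μ + ‖a‖ₑ * eLpNorm' Z q μ := by
        rw [eLpNorm'_const_smul _ (by linarith), eLpNorm'_const_smul _ (by linarith), enorm_neg]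

end LpSeminorm

lemma integrable_abs_rpow_gaussianReal (m : ℝ) (v : ℝ≥0) {q : ℝ} (hq : 0 ≤ q) :
    Integrable (fun z : ℝ => |z| ^ q) (gaussianReal m v) := by
  simpa [hq] using (memLp_id_gaussianReal (μ := m) (v := v) q.toNNReal).integrable_norm_rpow'

lemma eLpNorm'_eq_of_map_eq_gaussianReal {Ω : Type*} [MeasurableSpace Ω] {μ : Measure Ω}
    {Z : Ω → ℝ} (hZ : Measurable Z) {m : ℝ} {v : ℝ≥0} (hlaw : μ.map Z = gaussianReal m v)
    {q : ℝ} (hq : 0 < q) :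
    eLpNorm' Z q μ = ENNReal.ofReal ((∫ z, |z| ^ q ∂gaussianReal m v) ^ (1 / q)) := by
  have hmap : eLpNorm' Z q μ = eLpNorm' id q (gaussianReal m v) := by
    rw [eLpNorm'_eq_lintegral_enorm, eLpNorm'_eq_lintegral_enorm, ← hlaw,
      lintegral_map (by fun_prop) hZ]
    rfl
  rw [hmap]
  exact eLpNorm'_eq_ofReal_integral_rpow (f := id) hq (integrable_abs_rpow_gaussianReal m v hq.le)

lemma eLpNorm'_linear_estimation_error_le {Ω : Type*} [MeasurableSpace Ω] {μ : Measure Ω}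
    {X Z : Ω → ℝ} (hX : AEStronglyMeasurable X μ) (hZ : Measurable Z) {m : ℝ} {v : ℝ≥0}
    (hZlaw : μ.map Z = gaussianReal m v) {p σ snr : ℝ} (hp : 1 ≤ p) (hσ : 0 ≤ σ)
    (hsnr : 0 ≤ snr) (hXp : Integrable (fun ω => |X ω| ^ p) μ)
    (hmom : ∫ ω, |X ω| ^ p ∂μ ≤ σ ^ p * ∫ z, |z| ^ p ∂gaussianReal m v) :
    eLpNorm' (fun ω => X ω
        - σ ^ 2 * Real.sqrt snr / (1 + σ ^ 2 * snr) * (Real.sqrt snr * X ω + Z ω)) p μ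
      ≤ ENNReal.ofReal (σ * (1 + σ * Real.sqrt snr) / (1 + σ ^ 2 * snr)
          * (∫ z, |z| ^ p ∂gaussianReal m v) ^ (1 / p)) := by
  have hp0 : 0 < p := by linarith
  set M := ∫ z, |z| ^ p ∂gaussianReal m v
  have hM : 0 ≤ M := integral_nonneg fun z => by positivity
  set D := 1 + σ ^ 2 * snr
  have hD : 0 < D := by positivity
  set a := σ ^ 2 * Real.sqrt snr / D
  have hcoef : 1 - a * Real.sqrt snr = 1 / D := by
    simp only [a, D]
    field_simp
    rw [Real.sq_sqrt hsnr]
    ring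
  calc _ ≤ ‖1 - a * Real.sqrt snr‖ₑ * eLpNorm' X p μ + ‖a‖ₑ * eLpNorm' Z p μ :=
        eLpNorm'_sub_mul_add_le hX hZ.aestronglyMeasurable hp _ _
    _ ≤ ENNReal.ofReal (1 / D) * ENNReal.ofReal (σ * M ^ (1 / p))
          + ENNReal.ofReal a * ENNReal.ofReal (M ^ (1 / p)) := by
        rw [hcoef, Real.enorm_of_nonneg (by positivity), Real.enorm_of_nonneg (by positivity),
          eLpNorm'_eq_of_map_eq_gaussianReal hZ hZlaw hp0]
        gcongr
        exact eLpNorm'_le_of_integral_rpow_le hp0 hσ hM hXp hmom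
    _ = _ := by
        rw [← ENNReal.ofReal_mul (by positivity), ← ENNReal.ofReal_mul (by positivity),
          ← ENNReal.ofReal_add (by positivity) (by positivity)]
        congr 1
        simp only [a]
        field_simp

lemma rpow_mul_rpow_one_div_eq {σ snr M p : ℝ} (hσ : 0 ≤ σ) (hsnr : 0 ≤ snr) (hM : 0 ≤ M)
    (hp : 0 < p) :
    (σ * (1 + σ * Real.sqrt snr) / (1 + σ ^ 2 * snr) * M ^ (1 / p)) ^ p
      = ((1 + σ * Real.sqrt snr) / Real.sqrt (1 + σ ^ 2 * snr)) ^ p * σ ^ p * M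
          / (1 + snr * σ ^ 2) ^ (p / 2) := by
  set D := 1 + σ ^ 2 * snr
  have hD : 0 < D := by positivity
  have hsqrt : Real.sqrt D ^ p = D ^ (p / 2) := by
    rw [Real.sqrt_eq_rpow, ← Real.rpow_mul hD.le, one_div_mul_eq_div]
  have hfactor : σ * (1 + σ * Real.sqrt snr) / D
      = (1 + σ * Real.sqrt snr) / Real.sqrt D * σ / Real.sqrt D := by
    field_simp
    rw [Real.sq_sqrt hD.le]
  rw [Real.mul_rpow (by positivity) (by positivity), ← Real.rpow_mul hM,
    one_div_mul_cancel hp.ne', Real.rpow_one, hfactor,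
    Real.div_rpow (by positivity) (Real.sqrt_nonneg _), Real.mul_rpow (by positivity) hσ,
    hsqrt, show 1 + snr * σ ^ 2 = D by ring, div_mul_eq_mul_div]

theorem mmpe_gaussian_hardest_general
    {Ω : Type*} [MeasurableSpace Ω] (μ : Measure Ω)
    (X Z : Ω → ℝ) (hX : Measurable X) (hZ : Measurable Z)
    (hZlaw : μ.map Z = gaussianReal 0 1)
    (p : ℝ) (hp : 1 ≤ p) (σ : ℝ) (hσ : 0 ≤ σ)
    (hXp : Integrable (fun ω => |X ω| ^ p) μ)
    (hmom : ∫ ω, |X ω| ^ p ∂μ ≤ σ ^ p * ∫ z, |z| ^ p ∂(gaussianReal 0 1))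
    (snr : ℝ) (hsnr : 0 ≤ snr) :
    (⨅ f : {f : ℝ → ℝ // Measurable f},
        ∫⁻ ω, (‖X ω - f.1 (Real.sqrt snr * X ω + Z ω)‖₊ : ENNReal) ^ p ∂μ)
      ≤ ENNReal.ofReal
          (((1 + σ * Real.sqrt snr) / Real.sqrt (1 + σ ^ 2 * snr)) ^ p *
            σ ^ p * (∫ z, |z| ^ p ∂(gaussianReal 0 1)) / (1 + snr * σ ^ 2) ^ (p / 2)) := by
  have hp0 : 0 < p := by linarith
  set a := σ ^ 2 * Real.sqrt snr / (1 + σ ^ 2 * snr)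
  refine (iInf_le _ ⟨fun y => a * y, measurable_const_mul a⟩).trans ?_
  calc _ = eLpNorm' (fun ω => X ω - a * (Real.sqrt snr * X ω + Z ω)) p μ ^ p :=
        lintegral_rpow_enorm_eq_rpow_eLpNorm' hp0
    _ ≤ ENNReal.ofReal (σ * (1 + σ * Real.sqrt snr) / (1 + σ ^ 2 * snr)
          * (∫ z, |z| ^ p ∂gaussianReal 0 1) ^ (1 / p)) ^ p := by
        gcongr
        exact eLpNorm'_linear_estimation_error_le hX.aestronglyMeasurable hZ hZlaw hp hσ hsnr
          hXp hmom
    _ = _ := by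
        rw [ENNReal.ofReal_rpow_of_nonneg (by positivity) hp0.le,
          rpow_mul_rpow_one_div_eq hσ hsnr (integral_nonneg fun z => by positivity) hp0]

/-- **Gaussian inputs are asymptotically the hardest to estimate.**
If `E[|X|^p] ≤ σ^p E[|Z|^p]` with `Z ~ N(0,1)` and `p ≥ 1`, then for all `snr ≥ 0`,
`mmpe(X, snr, p) ≤ ((1 + σ√snr)/√(1 + σ²snr))^p · σ^p E[|Z|^p] / (1 + snr σ²)^(p/2)`. -/
theorem mmpe_gaussian_hardest
    {Ω : Type*} [MeasurableSpace Ω] (μ : Measure Ω) [IsProbabilityMeasure μ]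
    (X Z : Ω → ℝ) (hX : Measurable X) (hZ : Measurable Z)
    (hZlaw : μ.map Z = gaussianReal 0 1) (hindep : IndepFun X Z μ)
    (p : ℝ) (hp : 1 ≤ p) (σ : ℝ) (hσ : 0 ≤ σ)
    (hXp : Integrable (fun ω => |X ω| ^ p) μ)
    (hmom : ∫ ω, |X ω| ^ p ∂μ ≤ σ ^ p * ∫ z, |z| ^ p ∂(gaussianReal 0 1))
    (snr : ℝ) (hsnr : 0 ≤ snr) :
    (⨅ f : {f : ℝ → ℝ // Measurable f},
        ∫⁻ ω, (‖X ω - f.1 (Real.sqrt snr * X ω + Z ω)‖₊ : ENNReal) ^ p ∂μ)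
      ≤ ENNReal.ofReal
          (((1 + σ * Real.sqrt snr) / Real.sqrt (1 + σ ^ 2 * snr)) ^ p *
            σ ^ p * (∫ z, |z| ^ p ∂(gaussianReal 0 1)) / (1 + snr * σ ^ 2) ^ (p / 2)) :=
  mmpe_gaussian_hardest_general μ X Z hX hZ hZlaw p hp σ hσ hXp hmom snr hsnr
end

section
/- Continuity of MMPE in the order: for fixed X and snr > 0, the map p ↦ mmpe(X, snr, p) = inf_f E[|X - f(Y)|^p] is continuous on (0, ∞). -/
/-!
Write `M p` for the infimum over estimators `f` of `E|X - f(Y)|^p`. The reference estimator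
`y ↦ y / √snr` has error `W = |Z| / √snr`, which has moments of all orders. Clamping an arbitrary
estimator to within `c` of the reference one never hurts where `W ≤ c`, so at every order
`p ≤ r` it costs at most the tail `E[(2W)^r; W > c]`, and it bounds all moments of the error by
those of `c + W`, uniformly in the estimator. For such clamped estimators Hölder's inequality
`E e^q ≤ (E e^p)^θ (E e^r)^(1-θ)` compares `M q` with `M p` up to that tail, and Lyapunov's
inequality `E e^q ≤ (E e^p)^(q/p)`, `q ≤ p`, does so without truncation. Letting `p → q` on
either side and then `c → ∞` gives continuity.
-/

open MeasureTheory ProbabilityTheory Filter Set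
open scoped ENNReal NNReal Topology

lemma ENNReal.tendsto_const_rpow {α : Type*} {l : Filter α} {x : ℝ≥0∞} (hx : x ≠ ∞)
    {u : α → ℝ} {t : ℝ} (hu : Tendsto u l (𝓝 t)) (h : x ≠ 0 ∨ 0 < t) :
    Tendsto (fun a => x ^ u a) l (𝓝 (x ^ t)) := by
  lift x to ℝ≥0 using hx
  have hx' : x ≠ 0 ∨ 0 < t := by simpa using h
  have hlim := ENNReal.tendsto_coe.2 (tendsto_const_nhds.nnrpow hu hx')
  rcases hx' with hx₀ | ht
  · simpa only [ENNReal.coe_rpow_of_ne_zero hx₀] using hlim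
  · rw [← ENNReal.coe_rpow_of_nonneg _ ht.le]
    refine hlim.congr' ?_
    filter_upwards [hu.eventually (lt_mem_nhds ht)] with a ha
    exact ENNReal.coe_rpow_of_nonneg _ ha.le

lemma ENNReal.tendsto_rpow_mul_rpow_one_sub {α : Type*} {l : Filter α} {x B : ℝ≥0∞}
    (hx : x ≠ ∞) (hB₀ : B ≠ 0) (hB : B ≠ ∞) {θ : α → ℝ} (hθ : Tendsto θ l (𝓝 1)) :
    Tendsto (fun a => x ^ θ a * B ^ (1 - θ a)) l (𝓝 x) := by
  have hx' := ENNReal.tendsto_const_rpow hx hθ (Or.inr one_pos)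
  have hB' := ENNReal.tendsto_const_rpow hB (by simpa using hθ.const_sub 1) (Or.inl hB₀)
  rw [ENNReal.rpow_one] at hx'
  rw [ENNReal.rpow_zero] at hB'
  simpa using ENNReal.Tendsto.mul hx' (Or.inr ENNReal.one_ne_top) hB' (Or.inl one_ne_zero)

lemma ENNReal.eventually_rpow_lt {α : Type*} {l : Filter α} {x z : ℝ≥0∞} (hxz : x < z)
    {θ : α → ℝ} (hθ : Tendsto θ l (𝓝 1)) : ∀ᶠ a in l, x ^ θ a < z := by
  have h := ENNReal.tendsto_const_rpow hxz.ne_top hθ (Or.inr one_pos)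
  rw [ENNReal.rpow_one] at h
  exact h.eventually (gt_mem_nhds hxz)

lemma abs_sub_max_min_le (x g t : ℝ) {c : ℝ} (hc : 0 ≤ c) :
    |x - max (g - c) (min t (g + c))| ≤ c + |x - g| := by
  have hclamp : |g - max (g - c) (min t (g + c))| ≤ c := by
    rw [abs_le]
    constructor
    · linarith [max_le (by linarith : g - c ≤ g + c) (min_le_right t (g + c))]
    · linarith [le_max_left (g - c) (min t (g + c))]
  linarith [abs_sub_le x g (max (g - c) (min t (g + c)))]

lemma abs_sub_max_min_le_of_abs_sub_le {x g t c : ℝ} (h : |x - g| ≤ c) :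
    |x - max (g - c) (min t (g + c))| ≤ |x - t| := by
  rw [abs_le] at h
  have hx : max (g - c) (min x (g + c)) = x := by
    rw [min_eq_left (by linarith), max_eq_right (by linarith)]
  calc |x - max (g - c) (min t (g + c))|
      = |max (g - c) (min x (g + c)) - max (g - c) (min t (g + c))| := by rw [hx]
    _ ≤ |min x (g + c) - min t (g + c)| := by
        simpa only [max_comm (g - c)] using abs_max_sub_max_le_abs _ _ (g - c)
    _ ≤ |x - t| := by
        simpa using abs_min_sub_min_le_max x (g + c) t (g + c)

section Estimation

variable {Ω : Type*}

/-- Abstracts clamping an estimator to within `c` of a reference estimator whose error is `W`. -/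
def HasTruncations {ι : Type*} (E : ι → Ω → ℝ≥0∞) (W : Ω → ℝ≥0) : Prop :=
  ∀ (c : ℝ≥0) (i : ι), ∃ j, ∀ ω, E j ω ≤ c + W ω ∧ (W ω ≤ c → E j ω ≤ E i ω)

lemma hasTruncations_nnnorm_sub (X Y : Ω → ℝ) {g : ℝ → ℝ} (hg : Measurable g) :
    HasTruncations (fun (f : {f : ℝ → ℝ // Measurable f}) (ω : Ω) => (‖X ω - f.1 (Y ω)‖₊ : ℝ≥0∞))
      (fun ω => ‖X ω - g (Y ω)‖₊) := by
  intro c f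
  refine ⟨⟨fun y => max (g y - c) (min (f.1 y) (g y + c)),
    (hg.sub_const _).max (f.2.min (hg.add_const _))⟩, fun ω => ⟨?_, fun h => ?_⟩⟩
  · rw [← ENNReal.coe_add, ENNReal.coe_le_coe, ← NNReal.coe_le_coe]
    simpa [Real.norm_eq_abs] using abs_sub_max_min_le (X ω) (g (Y ω)) (f.1 (Y ω)) c.2
  · rw [ENNReal.coe_le_coe, ← NNReal.coe_le_coe]
    rw [← NNReal.coe_le_coe] at h
    simp only [coe_nnnorm, Real.norm_eq_abs] at h ⊢
    exact abs_sub_max_min_le_of_abs_sub_le h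

section Measure

variable [MeasurableSpace Ω] {μ : Measure Ω}

lemma lintegral_rpow_interpolation_le {F : Ω → ℝ≥0∞} (hF : AEMeasurable F μ) {a b θ : ℝ}
    (ha : 0 ≤ a) (hb : 0 ≤ b) (hθ₀ : 0 ≤ θ) (hθ₁ : θ ≤ 1) :
    ∫⁻ ω, F ω ^ (θ * a + (1 - θ) * b) ∂μ ≤
      (∫⁻ ω, F ω ^ a ∂μ) ^ θ * (∫⁻ ω, F ω ^ b ∂μ) ^ (1 - θ) := by
  have hθ₁' : 0 ≤ 1 - θ := sub_nonneg.2 hθ₁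
  calc ∫⁻ ω, F ω ^ (θ * a + (1 - θ) * b) ∂μ
      = ∫⁻ ω, (F ω ^ a) ^ θ * (F ω ^ b) ^ (1 - θ) ∂μ := by
        refine lintegral_congr fun ω => ?_
        rw [← ENNReal.rpow_mul, ← ENNReal.rpow_mul, ← ENNReal.rpow_add_of_nonneg _ _
          (by positivity) (by positivity), mul_comm a, mul_comm b]
    _ ≤ _ := ENNReal.lintegral_mul_norm_pow_le (hF.pow_const a) (hF.pow_const b) hθ₀ hθ₁'
        (by ring)

lemma lintegral_rpow_le_rpow_div [IsProbabilityMeasure μ] {F : Ω → ℝ≥0∞}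
    (hF : AEMeasurable F μ) {a b : ℝ} (ha : 0 ≤ a) (hab : a ≤ b) (hb : 0 < b) :
    ∫⁻ ω, F ω ^ a ∂μ ≤ (∫⁻ ω, F ω ^ b ∂μ) ^ (a / b) := by
  have h := lintegral_rpow_interpolation_le (μ := μ) hF le_rfl hb.le (θ := 1 - a / b)
    (by rw [sub_nonneg, div_le_one hb]; exact hab) (by simp; positivity)
  simpa [div_mul_cancel₀ _ hb.ne'] using h

lemma lintegral_rpow_le_add_setLIntegral_gt {F G : Ω → ℝ≥0∞} {W : Ω → ℝ≥0}
    (hF : AEMeasurable F μ) {c : ℝ≥0} (hc : 1 ≤ c) (hG : ∀ ω, G ω ≤ c + W ω)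
    (hGF : ∀ ω, W ω ≤ c → G ω ≤ F ω) {p r : ℝ} (hp : 0 ≤ p) (hpr : p ≤ r) :
    ∫⁻ ω, G ω ^ p ∂μ ≤
      ∫⁻ ω, F ω ^ p ∂μ + ∫⁻ ω in {ω | c < W ω}, (2 * W ω : ℝ≥0∞) ^ r ∂μ := by
  have hpointwise : ∀ ω, G ω ^ p ≤
      F ω ^ p + {ω | c < W ω}.indicator (fun ω => (2 * W ω : ℝ≥0∞) ^ r) ω := by
    intro ω
    by_cases hW : c < W ω
    · rw [indicator_of_mem (show ω ∈ {ω | c < W ω} from hW)]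
      have hcW : (c : ℝ≥0∞) ≤ W ω := ENNReal.coe_le_coe.2 hW.le
      refine le_add_left ?_
      calc G ω ^ p ≤ (2 * W ω : ℝ≥0∞) ^ p :=
            ENNReal.rpow_le_rpow ((hG ω).trans (by rw [two_mul]; gcongr)) hp
        _ ≤ (2 * W ω : ℝ≥0∞) ^ r := by
            refine ENNReal.rpow_le_rpow_of_exponent_le ?_ hpr
            calc (1 : ℝ≥0∞) ≤ c := by exact_mod_cast hc
              _ ≤ 2 * W ω := hcW.trans (by rw [two_mul]; exact le_self_add)
    · rw [indicator_of_notMem (show ω ∉ {ω | c < W ω} from hW), add_zero]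
      exact ENNReal.rpow_le_rpow (hGF ω (not_lt.1 hW)) hp
  calc ∫⁻ ω, G ω ^ p ∂μ ≤ ∫⁻ ω, (F ω ^ p +
        {ω | c < W ω}.indicator (fun ω => (2 * W ω : ℝ≥0∞) ^ r) ω) ∂μ :=
        lintegral_mono hpointwise
    _ = _ + _ := lintegral_add_left' (hF.pow_const p) _
    _ ≤ _ := add_le_add le_rfl (lintegral_indicator_le _ _)

lemma tendsto_setLIntegral_gt_atTop [IsFiniteMeasure μ] {W : Ω → ℝ≥0} (hW : Measurable W)
    {V : Ω → ℝ≥0∞} (hV : ∫⁻ ω, V ω ∂μ ≠ ∞) :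
    Tendsto (fun c : ℝ≥0 => ∫⁻ ω in {ω | c < W ω}, V ω ∂μ) atTop (𝓝 0) := by
  refine tendsto_setLIntegral_zero hV ?_
  have h := tendsto_measure_iInter_atTop (μ := μ) (s := fun c : ℝ≥0 => {ω | c < W ω})
    (fun c => (measurableSet_lt measurable_const hW).nullMeasurableSet)
    (fun c d hcd ω (hω : d < W ω) => hcd.trans_lt hω) ⟨0, measure_ne_top _ _⟩
  rwa [iInter_eq_empty_iff.2 fun ω => ⟨W ω, fun h => lt_irrefl (W ω) h⟩, measure_empty] at h

lemma lintegral_two_mul_rpow_ne_top {W : Ω → ℝ≥0} {r : ℝ} (hr : 0 ≤ r)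
    (hW : ∫⁻ ω, (W ω : ℝ≥0∞) ^ r ∂μ ≠ ∞) :
    ∫⁻ ω, (2 * W ω : ℝ≥0∞) ^ r ∂μ ≠ ∞ := by
  simp_rw [ENNReal.mul_rpow_of_nonneg _ _ hr]
  rw [lintegral_const_mul' _ _ (by simp)]
  exact ENNReal.mul_ne_top (by simp) hW

lemma lintegral_const_add_rpow_ne_top [IsFiniteMeasure μ] {W : Ω → ℝ≥0} (c : ℝ≥0) {r : ℝ}
    (hr : 1 ≤ r) (hWr : ∫⁻ ω, (W ω : ℝ≥0∞) ^ r ∂μ ≠ ∞) :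
    ∫⁻ ω, ((c : ℝ≥0∞) + W ω) ^ r ∂μ ≠ ∞ := by
  refine ne_top_of_le_ne_top ?_ (lintegral_mono fun ω =>
    ENNReal.rpow_add_le_mul_rpow_add_rpow (c : ℝ≥0∞) (W ω) hr)
  rw [lintegral_const_mul' _ _ (by simp), lintegral_add_left measurable_const]
  refine ENNReal.mul_ne_top (by simp) (ENNReal.add_ne_top.2 ⟨?_, hWr⟩)
  rw [lintegral_const]
  exact ENNReal.mul_ne_top (ENNReal.rpow_ne_top_of_nonneg (by linarith) (by simp))
    (measure_ne_top _ _)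

lemma one_le_lintegral_const_add_rpow [IsProbabilityMeasure μ] {W : Ω → ℝ≥0} {c : ℝ≥0}
    (hc : 1 ≤ c) {r : ℝ} (hr : 0 < r) :
    1 ≤ ∫⁻ ω, ((c : ℝ≥0∞) + W ω) ^ r ∂μ := by
  calc (1 : ℝ≥0∞) = ∫⁻ _, 1 ∂μ := by simp
    _ ≤ _ := lintegral_mono fun ω =>
      ENNReal.one_le_rpow (le_add_right (by exact_mod_cast hc)) hr

lemma exists_truncationLevel_eventually_lt [IsProbabilityMeasure μ] {W : Ω → ℝ≥0}
    (hW : Measurable W) {r : ℝ} (hr : 1 ≤ r) (hWr : ∫⁻ ω, (W ω : ℝ≥0∞) ^ r ∂μ ≠ ∞)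
    {y z : ℝ≥0∞} (hyz : y < z) {α : Type*} {l : Filter α} {θ : α → ℝ}
    (hθ : Tendsto θ l (𝓝 1)) :
    ∃ c : ℝ≥0, 1 ≤ c ∧ ∀ᶠ a in l,
      (y + ∫⁻ ω in {ω | c < W ω}, (2 * W ω : ℝ≥0∞) ^ r ∂μ) ^ θ a *
        (∫⁻ ω, ((c : ℝ≥0∞) + W ω) ^ r ∂μ) ^ (1 - θ a) < z := by
  have htail := (tendsto_const_nhds (x := y)).add
    (tendsto_setLIntegral_gt_atTop hW (lintegral_two_mul_rpow_ne_top (by linarith) hWr))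
  rw [add_zero] at htail
  obtain ⟨c, hc, hcz⟩ := ((eventually_ge_atTop 1).and (htail.eventually (gt_mem_nhds hyz))).exists
  have hB₀ := (zero_lt_one.trans_le
    (one_le_lintegral_const_add_rpow (μ := μ) (W := W) hc (by linarith))).ne'
  exact ⟨c, hc, (ENNReal.tendsto_rpow_mul_rpow_one_sub hcz.ne_top hB₀
    (lintegral_const_add_rpow_ne_top c hr hWr) hθ).eventually (gt_mem_nhds hcz)⟩

section Truncation

variable {ι : Type*} {E : ι → Ω → ℝ≥0∞} {W : Ω → ℝ≥0}

lemma HasTruncations.iInf_lintegral_rpow_le (hT : HasTruncations E W)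
    (hE : ∀ i, AEMeasurable (E i) μ) {c : ℝ≥0} (hc : 1 ≤ c) {a r θ : ℝ} (ha : 0 ≤ a)
    (har : a ≤ r) (hθ₀ : 0 ≤ θ) (hθ₁ : θ ≤ 1) (i : ι) :
    ⨅ j, ∫⁻ ω, E j ω ^ (θ * a + (1 - θ) * r) ∂μ ≤
      (∫⁻ ω, E i ω ^ a ∂μ + ∫⁻ ω in {ω | c < W ω}, (2 * W ω : ℝ≥0∞) ^ r ∂μ) ^ θ *
        (∫⁻ ω, ((c : ℝ≥0∞) + W ω) ^ r ∂μ) ^ (1 - θ) := by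
  obtain ⟨j, hj⟩ := hT c i
  calc ⨅ j, ∫⁻ ω, E j ω ^ (θ * a + (1 - θ) * r) ∂μ
      ≤ ∫⁻ ω, E j ω ^ (θ * a + (1 - θ) * r) ∂μ := iInf_le _ j
    _ ≤ (∫⁻ ω, E j ω ^ a ∂μ) ^ θ * (∫⁻ ω, E j ω ^ r ∂μ) ^ (1 - θ) :=
        lintegral_rpow_interpolation_le (hE j) ha (ha.trans har) hθ₀ hθ₁
    _ ≤ _ := by
        gcongr ?_ ^ _ * ?_ ^ _
        · exact lintegral_rpow_le_add_setLIntegral_gt (hE i) hc (fun ω => (hj ω).1)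
            (fun ω => (hj ω).2) ha har
        · exact lintegral_mono fun ω => ENNReal.rpow_le_rpow (hj ω).1 (ha.trans har)

lemma HasTruncations.eventually_iInf_lintegral_rpow_lt [IsProbabilityMeasure μ]
    (hT : HasTruncations E W) (hE : ∀ i, AEMeasurable (E i) μ) (hW : Measurable W)
    (hWr : ∀ r : ℝ, 0 < r → ∫⁻ ω, (W ω : ℝ≥0∞) ^ r ∂μ ≠ ∞) {q : ℝ} (hq : 0 < q) {b : ℝ≥0∞}
    (hb : ⨅ i, ∫⁻ ω, E i ω ^ q ∂μ < b) :
    ∀ᶠ p in 𝓝 q, ⨅ i, ∫⁻ ω, E i ω ^ p ∂μ < b := by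
  obtain ⟨i, hi⟩ := iInf_lt_iff.1 hb
  obtain ⟨c, hc, hright⟩ := exists_truncationLevel_eventually_lt hW (by linarith : 1 ≤ q + 1)
    (hWr (q + 1) (by linarith)) hi (θ := fun p => q + 1 - p)
    (by simpa using (tendsto_const_nhds (x := q + 1)).sub (tendsto_id (x := 𝓝 q)))
  have hleft := ENNReal.eventually_rpow_lt hi (θ := fun p => p / q)
    (by simpa [hq.ne'] using (tendsto_id (x := 𝓝 q)).div_const q)
  filter_upwards [hleft, hright, Ioo_mem_nhds hq (lt_add_one q)] with p hpl hpr hp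
  rcases le_total p q with hpq | hqp
  · calc ⨅ i, ∫⁻ ω, E i ω ^ p ∂μ ≤ ∫⁻ ω, E i ω ^ p ∂μ := iInf_le _ i
      _ ≤ (∫⁻ ω, E i ω ^ q ∂μ) ^ (p / q) := lintegral_rpow_le_rpow_div (hE i) hp.1.le hpq hq
      _ < b := hpl
  · have h := hT.iInf_lintegral_rpow_le hE hc hq.le (le_add_of_nonneg_right zero_le_one)
      (θ := q + 1 - p) (by linarith [hp.2]) (by linarith) i
    rw [show (q + 1 - p) * q + (1 - (q + 1 - p)) * (q + 1) = p by ring] at h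
    exact h.trans_lt hpr

lemma HasTruncations.eventually_lt_iInf_lintegral_rpow [IsProbabilityMeasure μ]
    (hT : HasTruncations E W) (hE : ∀ i, AEMeasurable (E i) μ) (hW : Measurable W)
    (hWr : ∀ r : ℝ, 0 < r → ∫⁻ ω, (W ω : ℝ≥0∞) ^ r ∂μ ≠ ∞) {q : ℝ} (hq : 0 < q) {a : ℝ≥0∞}
    (ha : a < ⨅ i, ∫⁻ ω, E i ω ^ q ∂μ) :
    ∀ᶠ p in 𝓝 q, a < ⨅ i, ∫⁻ ω, E i ω ^ p ∂μ := by
  set M := ⨅ i, ∫⁻ ω, E i ω ^ q ∂μ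
  obtain ⟨a', haa', ha'⟩ := exists_between ha
  obtain ⟨c, hc, hleft⟩ := exists_truncationLevel_eventually_lt hW (by linarith : 1 ≤ q + 1)
    (hWr (q + 1) (by linarith)) ha' (θ := fun p => (1 + q - p)⁻¹)
    (by simpa using ((tendsto_const_nhds (x := 1 + q)).sub (tendsto_id (x := 𝓝 q))).inv₀ (by simp))
  have hright := ENNReal.eventually_rpow_lt ha' (θ := fun p => q / p)
    (by rw [← div_self hq.ne']; exact tendsto_const_nhds.div tendsto_id hq.ne')
  filter_upwards [hleft, hright, Ioi_mem_nhds hq] with p hpl hpr (hp : 0 < p)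
  by_contra! hpa
  obtain ⟨i, hi⟩ := iInf_lt_iff.1 (hpa.trans_lt haa')
  refine lt_irrefl M ?_
  rcases lt_or_ge p q with hpq | hqp
  · have hθ₀ : 0 ≤ (1 + q - p)⁻¹ := inv_nonneg.2 (by linarith)
    have h := hT.iInf_lintegral_rpow_le hE hc hp.le (by linarith : p ≤ q + 1) hθ₀
      (inv_le_one_of_one_le₀ (by linarith)) i
    have hd : 1 + q - p ≠ 0 := by linarith
    rw [show (1 + q - p)⁻¹ * p + (1 - (1 + q - p)⁻¹) * (q + 1) = q by
      field_simp; ring] at h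
    calc M ≤ _ := h
      _ ≤ _ := by gcongr
      _ < M := hpl
  · calc M ≤ ∫⁻ ω, E i ω ^ q ∂μ := iInf_le _ i
      _ ≤ (∫⁻ ω, E i ω ^ p ∂μ) ^ (q / p) := lintegral_rpow_le_rpow_div (hE i) hq.le hqp hp
      _ ≤ a' ^ (q / p) := by gcongr
      _ < M := hpr

theorem HasTruncations.continuousOn_iInf_lintegral_rpow [IsProbabilityMeasure μ]
    (hT : HasTruncations E W) (hE : ∀ i, AEMeasurable (E i) μ) (hW : Measurable W)
    (hWr : ∀ r : ℝ, 0 < r → ∫⁻ ω, (W ω : ℝ≥0∞) ^ r ∂μ ≠ ∞) :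
    ContinuousOn (fun p : ℝ => ⨅ i, ∫⁻ ω, E i ω ^ p ∂μ) (Ioi 0) := fun _ hq =>
  ContinuousAt.continuousWithinAt <| tendsto_order.2
    ⟨fun _ ha => hT.eventually_lt_iInf_lintegral_rpow hE hW hWr hq ha,
      fun _ hb => hT.eventually_iInf_lintegral_rpow_lt hE hW hWr hq hb⟩

end Truncation

lemma MemLp.lintegral_nnnorm_rpow_ne_top {f : Ω → ℝ} {r : ℝ} (hr : 0 < r)
    (hf : MemLp f (ENNReal.ofReal r) μ) : ∫⁻ ω, (‖f ω‖₊ : ℝ≥0∞) ^ r ∂μ ≠ ∞ := by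
  have h := lintegral_rpow_enorm_lt_top_of_eLpNorm_lt_top (by simpa using hr) ENNReal.ofReal_ne_top
    hf.eLpNorm_lt_top
  simp_rw [ENNReal.toReal_ofReal hr.le, enorm_eq_nnnorm] at h
  exact h.ne

lemma memLp_of_map_eq_gaussianReal {Z : Ω → ℝ} (hZ : Measurable Z) {m : ℝ} {v : ℝ≥0}
    (hZlaw : μ.map Z = gaussianReal m v) (p : ℝ≥0) : MemLp Z p μ :=
  (memLp_map_measure_iff aestronglyMeasurable_id hZ.aemeasurable).1
    (hZlaw ▸ memLp_id_gaussianReal p)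

end Measure

end Estimation

theorem mmpe_continuous_in_order_general
    {Ω : Type*} [MeasurableSpace Ω] (μ : Measure Ω) [IsProbabilityMeasure μ]
    (X Z : Ω → ℝ) (hX : Measurable X) (hZ : Measurable Z)
    (hZlaw : μ.map Z = gaussianReal 0 1)
    (snr : ℝ) (hsnr : 0 < snr)
    (Y : Ω → ℝ) (hY : Y = fun ω => Real.sqrt snr * X ω + Z ω) :
    ContinuousOn
      (fun p : ℝ => ⨅ f : {f : ℝ → ℝ // Measurable f},
        ∫⁻ ω, (‖X ω - f.1 (Y ω)‖₊ : ENNReal) ^ p ∂μ)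
      (Set.Ioi (0 : ℝ)) := by
  have hYm : Measurable Y := hY ▸ (measurable_const.mul hX).add hZ
  have hg : Measurable fun y : ℝ => y / Real.sqrt snr := measurable_id.div_const _
  have herr : (fun ω => X ω - Y ω / Real.sqrt snr) = fun ω => -((Real.sqrt snr)⁻¹ * Z ω) := by
    have hs : Real.sqrt snr ≠ 0 := (Real.sqrt_pos.2 hsnr).ne'
    funext ω
    simp only [hY]
    field_simp
    ring
  refine (hasTruncations_nnnorm_sub X Y hg).continuousOn_iInf_lintegral_rpow
    (fun f => (hX.sub (f.2.comp hYm)).nnnorm.coe_nnreal_ennreal.aemeasurable)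
    (hX.sub (hg.comp hYm)).nnnorm fun r hr => ?_
  refine MemLp.lintegral_nnnorm_rpow_ne_top (f := fun ω => X ω - Y ω / Real.sqrt snr) hr ?_
  rw [herr]
  exact ((memLp_of_map_eq_gaussianReal hZ hZlaw r.toNNReal).const_mul _).neg

/-- **Continuity of the MMPE in the order `p`.**
For fixed `X` and `snr > 0`, with `Y = √snr·X + Z`, `Z ~ N(0,1)` independent of `X`,
the map `p ↦ mmpe(X, snr, p) = inf_f E[|X - f(Y)|^p]` is continuous on `(0, ∞)`. -/
theorem mmpe_continuous_in_order
    {Ω : Type*} [MeasurableSpace Ω] (μ : Measure Ω) [IsProbabilityMeasure μ]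
    (X Z : Ω → ℝ) (hX : Measurable X) (hZ : Measurable Z)
    (hZlaw : μ.map Z = gaussianReal 0 1) (hindep : IndepFun X Z μ)
    (snr : ℝ) (hsnr : 0 < snr)
    (Y : Ω → ℝ) (hY : Y = fun ω => Real.sqrt snr * X ω + Z ω) :
    ContinuousOn
      (fun p : ℝ => ⨅ f : {f : ℝ → ℝ // Measurable f},
        ∫⁻ ω, (‖X ω - f.1 (Y ω)‖₊ : ENNReal) ^ p ∂μ)
      (Set.Ioi (0 : ℝ)) :=
  mmpe_continuous_in_order_general μ X Z hX hZ hZlaw snr hsnr Y hY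
end

section
/- Change of measure for MMPE: for any real random variable X, any 0 < snr ≤ snr₀ and p > 0, mmpe(X, snr, p) = inf_f E[ |X - f(Y_{snr₀})|^p · √(snr/snr₀) · exp( ((snr₀ - snr)/(2 snr₀)) Z² ) ], where Y_{snr₀} = √snr₀ X + Z and Z ~ N(0,1) is independent of X. -/
/-!
Rescaling by `c = √(snr₀/snr)` turns `Y_snr = √snr X + Z` into `√snr₀ X + c Z`, where
`c Z ~ N(0, snr₀/snr)`. This law has density `√(snr/snr₀) exp(((snr₀ - snr)/(2 snr₀)) z²)` with
respect to `N(0, 1)`, so, conditionally on `X`, replacing `c Z` by `Z` costs exactly this likelihood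
ratio. Since `f ↦ f(c ·)` is a bijection of the measurable estimators, the infima agree.
-/

open MeasureTheory ProbabilityTheory
open scoped NNReal ENNReal

noncomputable def snrLikelihoodRatio (snr snr₀ z : ℝ) : ℝ :=
  √(snr / snr₀) * Real.exp (((snr₀ - snr) / (2 * snr₀)) * z ^ 2)

@[fun_prop]
lemma measurable_snrLikelihoodRatio (snr snr₀ : ℝ) : Measurable (snrLikelihoodRatio snr snr₀) := by
  unfold snrLikelihoodRatio
  fun_prop

lemma gaussianReal_map_sqrt_mul {v : ℝ} (hv : 0 ≤ v) :
    (gaussianReal 0 1).map (√v * ·) = gaussianReal 0 v.toNNReal := by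
  rw [gaussianReal_map_const_mul, mul_zero, mul_one]
  congr 1
  ext
  simp [Real.sq_sqrt hv, hv]

section Gaussian

variable {snr snr₀ : ℝ} (hsnr : 0 < snr) (hsnr₀ : 0 < snr₀)
include hsnr hsnr₀

lemma gaussianPDFReal_mul_snrLikelihoodRatio (z : ℝ) :
    gaussianPDFReal 0 1 z * snrLikelihoodRatio snr snr₀ z
      = gaussianPDFReal 0 (snr₀ / snr).toNNReal z := by
  have hvar : (((snr₀ / snr).toNNReal : ℝ≥0) : ℝ) = snr₀ / snr :=
    Real.coe_toNNReal _ (div_pos hsnr₀ hsnr).le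
  have hcoeff : (√(2 * Real.pi))⁻¹ * √(snr / snr₀) = (√(2 * Real.pi * (snr₀ / snr)))⁻¹ := by
    rw [Real.sqrt_mul (by positivity : (0 : ℝ) ≤ 2 * Real.pi) (snr₀ / snr), mul_inv,
      ← Real.sqrt_inv (snr₀ / snr), inv_div]
  have hexp : -z ^ 2 / 2 + (snr₀ - snr) / (2 * snr₀) * z ^ 2 = -z ^ 2 / (2 * (snr₀ / snr)) := by
    field_simp
    ring
  simp only [gaussianPDFReal, snrLikelihoodRatio, hvar, NNReal.coe_one, mul_one, sub_zero]
  rw [← hcoeff, ← hexp, Real.exp_add]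
  ring

lemma withDensity_snrLikelihoodRatio_gaussianReal :
    (gaussianReal 0 1).withDensity (fun z ↦ ENNReal.ofReal (snrLikelihoodRatio snr snr₀ z))
      = gaussianReal 0 (snr₀ / snr).toNNReal := by
  have hvar : (snr₀ / snr).toNNReal ≠ 0 := by
    simpa using div_pos hsnr₀ hsnr
  rw [gaussianReal_of_var_ne_zero _ one_ne_zero, gaussianReal_of_var_ne_zero _ hvar,
    ← withDensity_mul _ (measurable_gaussianPDF _ _)
      (measurable_snrLikelihoodRatio snr snr₀).ennreal_ofReal]
  congr 1
  funext z
  simp only [Pi.mul_apply, gaussianPDF, ← ENNReal.ofReal_mul (gaussianPDFReal_nonneg _ _ _),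
    gaussianPDFReal_mul_snrLikelihoodRatio hsnr hsnr₀]

lemma lintegral_mul_snrLikelihoodRatio_gaussianReal {g : ℝ → ℝ≥0∞} (hg : Measurable g) :
    ∫⁻ z, g z * ENNReal.ofReal (snrLikelihoodRatio snr snr₀ z) ∂gaussianReal 0 1
      = ∫⁻ z, g (√(snr₀ / snr) * z) ∂gaussianReal 0 1 := by
  have hL := (measurable_snrLikelihoodRatio snr snr₀).ennreal_ofReal
  calc ∫⁻ z, g z * ENNReal.ofReal (snrLikelihoodRatio snr snr₀ z) ∂gaussianReal 0 1
      = ∫⁻ z, g z ∂(gaussianReal 0 1).withDensity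
          (fun z ↦ ENNReal.ofReal (snrLikelihoodRatio snr snr₀ z)) := by
        rw [lintegral_withDensity_eq_lintegral_mul _ hL hg]
        simp only [Pi.mul_apply, mul_comm]
    _ = ∫⁻ z, g z ∂(gaussianReal 0 1).map (√(snr₀ / snr) * ·) := by
        rw [withDensity_snrLikelihoodRatio_gaussianReal hsnr hsnr₀,
          gaussianReal_map_sqrt_mul (div_pos hsnr₀ hsnr).le]
    _ = ∫⁻ z, g (√(snr₀ / snr) * z) ∂gaussianReal 0 1 := lintegral_map hg (by fun_prop)

end Gaussian

lemma ProbabilityTheory.IndepFun.lintegral_comp_prodMk {Ω α β : Type*} [MeasurableSpace Ω]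
    [MeasurableSpace α] [MeasurableSpace β] {μ : Measure Ω} [IsFiniteMeasure μ]
    {X : Ω → α} {Z : Ω → β} (hX : Measurable X) (hZ : Measurable Z) (hindep : IndepFun X Z μ)
    {F : α × β → ℝ≥0∞} (hF : Measurable F) :
    ∫⁻ ω, F (X ω, Z ω) ∂μ = ∫⁻ x, ∫⁻ z, F (x, z) ∂μ.map Z ∂μ.map X := by
  rw [← lintegral_map hF (hX.prodMk hZ),
    (indepFun_iff_map_prod_eq_prod_map_map hX.aemeasurable hZ.aemeasurable).mp hindep,
    lintegral_prod F hF.aemeasurable]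

lemma lintegral_mul_snrLikelihoodRatio {Ω : Type*} [MeasurableSpace Ω] {μ : Measure Ω}
    [IsFiniteMeasure μ] {X Z : Ω → ℝ} (hX : Measurable X) (hZ : Measurable Z)
    (hZlaw : μ.map Z = gaussianReal 0 1) (hindep : IndepFun X Z μ)
    {snr snr₀ : ℝ} (hsnr : 0 < snr) (hsnr₀ : 0 < snr₀)
    {h : ℝ → ℝ → ℝ≥0∞} (hh : Measurable (Function.uncurry h)) :
    ∫⁻ ω, h (X ω) (√snr₀ * X ω + Z ω) * ENNReal.ofReal (snrLikelihoodRatio snr snr₀ (Z ω)) ∂μ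
      = ∫⁻ ω, h (X ω) (√(snr₀ / snr) * (√snr * X ω + Z ω)) ∂μ := by
  have hscale : √(snr₀ / snr) * √snr = √snr₀ := by
    rw [← Real.sqrt_mul (div_pos hsnr₀ hsnr).le, div_mul_cancel₀ _ hsnr.ne']
  have hinner (x : ℝ) :
      ∫⁻ z, h x (√snr₀ * x + z) * ENNReal.ofReal (snrLikelihoodRatio snr snr₀ z) ∂gaussianReal 0 1
        = ∫⁻ z, h x (√(snr₀ / snr) * (√snr * x + z)) ∂gaussianReal 0 1 := by
    rw [lintegral_mul_snrLikelihoodRatio_gaussianReal hsnr hsnr₀ (by fun_prop)]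
    simp only [mul_add, ← mul_assoc, hscale]
  rw [hindep.lintegral_comp_prodMk (F := fun q ↦ h q.1 (√snr₀ * q.1 + q.2) *
      ENNReal.ofReal (snrLikelihoodRatio snr snr₀ q.2)) hX hZ ?_,
    hindep.lintegral_comp_prodMk (F := fun q ↦ h q.1 (√(snr₀ / snr) * (√snr * q.1 + q.2)))
      hX hZ ?_]
  · simp only [hZlaw, hinner]
  · fun_prop
  · fun_prop

lemma MeasurableEquiv.iInf_measurable_comp {α β γ δ : Type*} [MeasurableSpace α]
    [MeasurableSpace β] [MeasurableSpace γ] [InfSet δ] (e : α ≃ᵐ β) (Φ : (α → γ) → δ) :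
    ⨅ f : {f : β → γ // Measurable f}, Φ (f.1 ∘ e) = ⨅ g : {g : α → γ // Measurable g}, Φ g.1 :=
  Equiv.iInf_congr
    { toFun := fun f ↦ ⟨f.1 ∘ e, f.2.comp e.measurable⟩
      invFun := fun g ↦ ⟨g.1 ∘ e.symm, g.2.comp e.symm.measurable⟩
      left_inv := fun f ↦ by ext; simp
      right_inv := fun g ↦ by ext; simp }
    fun _ ↦ rfl

theorem mmpe_change_of_measure_general
    {Ω : Type*} [MeasurableSpace Ω] (μ : Measure Ω) [IsProbabilityMeasure μ]
    (X Z : Ω → ℝ) (hX : Measurable X) (hZ : Measurable Z)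
    (hZlaw : μ.map Z = gaussianReal 0 1) (hindep : IndepFun X Z μ)
    (snr snr₀ : ℝ) (hsnr : 0 < snr) (hle : snr ≤ snr₀) (p : ℝ)
    (Y₀ : Ω → ℝ) (hY₀ : Y₀ = fun ω => Real.sqrt snr₀ * X ω + Z ω) :
    (⨅ f : {f : ℝ → ℝ // Measurable f},
        ∫⁻ ω, (‖X ω - f.1 (Real.sqrt snr * X ω + Z ω)‖₊ : ENNReal) ^ p ∂μ)
      = ⨅ f : {f : ℝ → ℝ // Measurable f},
          ∫⁻ ω, (‖X ω - f.1 (Y₀ ω)‖₊ : ENNReal) ^ p *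
            ENNReal.ofReal
              (Real.sqrt (snr / snr₀) *
                Real.exp (((snr₀ - snr) / (2 * snr₀)) * (Z ω) ^ 2)) ∂μ := by
  subst hY₀
  have hsnr₀ : 0 < snr₀ := hsnr.trans_le hle
  have hc : √(snr₀ / snr) ≠ 0 := (Real.sqrt_pos.mpr (div_pos hsnr₀ hsnr)).ne'
  calc _ = ⨅ f : {f : ℝ → ℝ // Measurable f},
        ∫⁻ ω, (‖X ω - f.1 (√(snr₀ / snr) * (√snr * X ω + Z ω))‖₊ : ℝ≥0∞) ^ p ∂μ :=
        (MeasurableEquiv.iInf_measurable_comp (MeasurableEquiv.mulLeft₀ _ hc)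
          (fun g ↦ ∫⁻ ω, (‖X ω - g (√snr * X ω + Z ω)‖₊ : ℝ≥0∞) ^ p ∂μ)).symm
    _ = _ := iInf_congr fun ⟨f, hf⟩ ↦ (lintegral_mul_snrLikelihoodRatio hX hZ hZlaw hindep
        hsnr hsnr₀ (h := fun x y ↦ (‖x - f y‖₊ : ℝ≥0∞) ^ p) (by fun_prop)).symm

/-- **Change of measure for the MMPE.**
For any real random variable `X`, `0 < snr ≤ snr₀` and `p > 0`:
`mmpe(X, snr, p)
  = inf_f E[ |X - f(Y₀)|^p · √(snr/snr₀) · exp(((snr₀-snr)/(2snr₀)) Z²) ]`,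
where `Y₀ = √snr₀·X + Z`, `Z ~ N(0,1)` independent of `X`. -/
theorem mmpe_change_of_measure
    {Ω : Type*} [MeasurableSpace Ω] (μ : Measure Ω) [IsProbabilityMeasure μ]
    (X Z : Ω → ℝ) (hX : Measurable X) (hZ : Measurable Z)
    (hZlaw : μ.map Z = gaussianReal 0 1) (hindep : IndepFun X Z μ)
    (snr snr₀ : ℝ) (hsnr : 0 < snr) (hle : snr ≤ snr₀) (p : ℝ) (hp : 0 < p)
    (Y₀ : Ω → ℝ) (hY₀ : Y₀ = fun ω => Real.sqrt snr₀ * X ω + Z ω) :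
    (⨅ f : {f : ℝ → ℝ // Measurable f},
        ∫⁻ ω, (‖X ω - f.1 (Real.sqrt snr * X ω + Z ω)‖₊ : ENNReal) ^ p ∂μ)
      = ⨅ f : {f : ℝ → ℝ // Measurable f},
          ∫⁻ ω, (‖X ω - f.1 (Y₀ ω)‖₊ : ENNReal) ^ p *
            ENNReal.ofReal
              (Real.sqrt (snr / snr₀) *
                Real.exp (((snr₀ - snr) / (2 * snr₀)) * (Z ω) ^ 2)) ∂μ :=
  mmpe_change_of_measure_general μ X Z hX hZ hZlaw hindep snr snr₀ hsnr hle p Y₀ hY₀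
end

section
/- Conditioning on an extra observation increases SNR: for any real random variable X, p > 0, snr₀, Δ ≥ 0, if U = √Δ·X + Z_Δ with Z_Δ ~ N(0,1) independent of (X, Z), then inf_f E[|X - f(Y_{snr₀}, U)|^p] = mmpe(X, snr₀ + Δ, p); in particular mmpe(X, snr, p) is non-increasing in snr. -/
/-!
Put `r = √(snr₀ + Δ)`. When `r > 0`, rotate the noise `(Z, Z_Δ)` by the orthogonal matrix with
first row `(√snr₀, √Δ) / r`: the first coordinate `W` is the noise of `Y' = r·X + W`, and the
second coordinate `V` is uncorrelated with `W`, hence independent of it (jointly Gaussian), hence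
independent of `(X, Y')`. Since `(Y₀, U)` is a linear function of `(Y', V)`, an estimator based on
`(Y₀, U)` is an estimator based on `Y'` that also uses the independent randomness `V`; averaging
over `V` shows that it cannot beat the best estimator based on `Y'`. Conversely `Y'` is a function
of `(Y₀, U)`, which gives equality, and `Y₀` is a function of `(Y₀, U)`, which gives monotonicity.
-/

open MeasureTheory ProbabilityTheory
open scoped ENNReal NNReal Real

section Mmpe

variable {Ω α β : Type*} [MeasurableSpace Ω] [MeasurableSpace α] [MeasurableSpace β]
  {μ : Measure Ω} {X : Ω → ℝ} {p : ℝ}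

/-- The paper's `mmpe(X, snr, p)` is `mmpe μ X (fun ω => √snr * X ω + Z ω) p`. -/
noncomputable def mmpe (μ : Measure Ω) (X : Ω → ℝ) (Y : Ω → α) (p : ℝ) : ℝ≥0∞ :=
  ⨅ f : {f : α → ℝ // Measurable f}, ∫⁻ ω, (‖X ω - f.1 (Y ω)‖₊ : ℝ≥0∞) ^ p ∂μ

lemma mmpe_le_mmpe_comp (Y : Ω → α) {φ : α → β} (hφ : Measurable φ) :
    mmpe μ X Y p ≤ mmpe μ X (fun ω => φ (Y ω)) p :=
  le_iInf fun f => iInf_le_of_le ⟨f.1 ∘ φ, f.2.comp hφ⟩ le_rfl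

lemma mmpe_le_mmpe_prodMk_of_indepFun [IsProbabilityMeasure μ] {T : Ω → α} {V : Ω → β}
    (hX : Measurable X) (hT : Measurable T) (hV : Measurable V)
    (hind : IndepFun (fun ω => (X ω, T ω)) V μ) :
    mmpe μ X T p ≤ mmpe μ X (fun ω => (T ω, V ω)) p := by
  refine le_iInf fun f => ?_
  have hf := f.2
  set G : (ℝ × α) × β → ℝ≥0∞ := fun q => (‖q.1.1 - f.1 (q.1.2, q.2)‖₊ : ℝ≥0∞) ^ p
  have hG : Measurable G := by fun_prop
  have hlaw := (indepFun_iff_map_prod_eq_prod_map_map (hX.prodMk hT).aemeasurable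
    hV.aemeasurable).mp hind
  have : IsProbabilityMeasure (μ.map V) := Measure.isProbabilityMeasure_map hV.aemeasurable
  calc mmpe μ X T p = ∫⁻ _, mmpe μ X T p ∂(μ.map V) := by simp
    _ ≤ ∫⁻ v, ∫⁻ xt, G (xt, v) ∂(μ.map fun ω => (X ω, T ω)) ∂(μ.map V) := by
      refine lintegral_mono fun v => ?_
      rw [lintegral_map (by fun_prop) (hX.prodMk hT)]
      exact iInf_le_of_le ⟨fun t => f.1 (t, v), by fun_prop⟩ le_rfl
    _ = ∫⁻ q, G q ∂((μ.map fun ω => (X ω, T ω)).prod (μ.map V)) :=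
      (lintegral_prod_symm G hG.aemeasurable).symm
    _ = ∫⁻ ω, (‖X ω - f.1 (T ω, V ω)‖₊ : ℝ≥0∞) ^ p ∂μ := by
      rw [← hlaw, lintegral_map hG ((hX.prodMk hT).prodMk hV)]

end Mmpe

namespace ProbabilityTheory

lemma IndepFun.prodMk_left_of_indepFun {Ω α β γ : Type*} [MeasurableSpace Ω] [MeasurableSpace α]
    [MeasurableSpace β] [MeasurableSpace γ] {μ : Measure Ω} [IsProbabilityMeasure μ]
    {X : Ω → α} {W : Ω → β} {V : Ω → γ}
    (hX : Measurable X) (hW : Measurable W) (hV : Measurable V)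
    (hXWV : IndepFun X (fun ω => (W ω, V ω)) μ) (hWV : IndepFun W V μ) :
    IndepFun (fun ω => (X ω, W ω)) V μ := by
  have hXW : μ.map (fun ω => (X ω, W ω)) = (μ.map X).prod (μ.map W) :=
    (indepFun_iff_map_prod_eq_prod_map_map hX.aemeasurable hW.aemeasurable).mp
      (hXWV.comp measurable_id measurable_fst)
  have hlaw := (indepFun_iff_map_prod_eq_prod_map_map hX.aemeasurable
    (hW.prodMk hV).aemeasurable).mp hXWV
  rw [(indepFun_iff_map_prod_eq_prod_map_map hW.aemeasurable hV.aemeasurable).mp hWV] at hlaw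
  rw [indepFun_iff_map_prod_eq_prod_map_map (hX.prodMk hW).aemeasurable hV.aemeasurable, hXW,
    ← (measurePreserving_prodAssoc (μ.map X) (μ.map W) (μ.map V)).symm.map_eq, ← hlaw,
    Measure.map_map (MeasurableEquiv.measurable _) (hX.prodMk (hW.prodMk hV))]
  rfl

lemma IndepFun.indepFun_add_sub_of_gaussianReal {Ω : Type*} [MeasurableSpace Ω] {μ : Measure Ω}
    {Z₁ Z₂ : Ω → ℝ} {m₁ m₂ : ℝ} {v : ℝ≥0}
    (hZ₁ : HasLaw Z₁ (gaussianReal m₁ v) μ) (hZ₂ : HasLaw Z₂ (gaussianReal m₂ v) μ)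
    (hind : IndepFun Z₁ Z₂ μ) (a b : ℝ) :
    IndepFun (fun ω => a * Z₁ ω + b * Z₂ ω) (fun ω => b * Z₁ ω - a * Z₂ ω) μ := by
  have hG₁ := hZ₁.hasGaussianLaw
  have hG₂ := hZ₂.hasGaussianLaw
  have := hG₁.isProbabilityMeasure
  have hL₁ := hG₁.memLp_two
  have hL₂ := hG₂.memLp_two
  have hjoint : HasGaussianLaw (fun ω => (a * Z₁ ω + b * Z₂ ω, b * Z₁ ω - a * Z₂ ω)) μ :=
    (hind.hasGaussianLaw hG₁ hG₂).map_fun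
      ((a • ContinuousLinearMap.fst ℝ ℝ ℝ + b • ContinuousLinearMap.snd ℝ ℝ ℝ).prod
        (b • ContinuousLinearMap.fst ℝ ℝ ℝ - a • ContinuousLinearMap.snd ℝ ℝ ℝ))
  refine hjoint.indepFun_of_covariance_eq_zero ?_
  have hvar : Var[Z₁; μ] = Var[Z₂; μ] := by
    rw [hZ₁.variance_eq, hZ₂.variance_eq, variance_id_gaussianReal, variance_id_gaussianReal]
  have hcov : cov[Z₁, Z₂; μ] = 0 := hind.covariance_eq_zero hL₁ hL₂
  refine (covariance_add_left (hL₁.const_mul a) (hL₂.const_mul b)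
    ((hL₁.const_mul b).sub (hL₂.const_mul a))).trans ?_
  rw [covariance_sub_right (hL₁.const_mul a) (hL₁.const_mul b) (hL₂.const_mul a),
    covariance_sub_right (hL₂.const_mul b) (hL₁.const_mul b) (hL₂.const_mul a)]
  simp only [covariance_const_mul_left, covariance_const_mul_right,
    covariance_self hG₁.aemeasurable, covariance_self hG₂.aemeasurable, hcov,
    covariance_comm Z₂ Z₁, hvar]
  ring

end ProbabilityTheory

lemma maximalRatio_combination (s t x z w : ℝ) :
    (s * (s * x + z) + t * (t * x + w)) / √(s ^ 2 + t ^ 2)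
      = √(s ^ 2 + t ^ 2) * x + (s * z + t * w) / √(s ^ 2 + t ^ 2) := by
  set r := √(s ^ 2 + t ^ 2)
  have hrr : r * r = s ^ 2 + t ^ 2 := Real.mul_self_sqrt (by positivity)
  calc (s * (s * x + z) + t * (t * x + w)) / r = r * r / r * x + (s * z + t * w) / r := by
        rw [hrr]; ring
    _ = r * x + (s * z + t * w) / r := by rw [mul_self_div_self]

section MaximalRatioCombining

variable {Ω : Type*} [MeasurableSpace Ω] {μ : Measure Ω} [IsProbabilityMeasure μ]
  {X Z₁ Z₂ : Ω → ℝ} {m₁ m₂ : ℝ} {v : ℝ≥0} {p : ℝ}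

lemma mmpe_maximalRatio_le_mmpe_pair (hX : Measurable X) (hZ₁ : Measurable Z₁)
    (hZ₂ : Measurable Z₂) (hZ₁law : μ.map Z₁ = gaussianReal m₁ v)
    (hZ₂law : μ.map Z₂ = gaussianReal m₂ v) (hXZ : IndepFun X (fun ω => (Z₁ ω, Z₂ ω)) μ)
    (hZZ : IndepFun Z₁ Z₂ μ) (s t : ℝ) :
    mmpe μ X (fun ω => √(s ^ 2 + t ^ 2) * X ω + (s * Z₁ ω + t * Z₂ ω) / √(s ^ 2 + t ^ 2)) p
      ≤ mmpe μ X (fun ω => (s * X ω + Z₁ ω, t * X ω + Z₂ ω)) p := by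
  rcases (Real.sqrt_nonneg (s ^ 2 + t ^ 2)).eq_or_lt with hr | hr
  · have hs : s = 0 := by nlinarith [Real.sqrt_eq_zero'.mp hr.symm]
    have ht : t = 0 := by nlinarith [Real.sqrt_eq_zero'.mp hr.symm]
    subst hs ht
    simp only [← hr, zero_mul, zero_add, div_zero]
    calc mmpe μ X (fun _ => (0 : ℝ)) p
        ≤ mmpe μ X (fun ω => ((0 : ℝ), (Z₁ ω, Z₂ ω))) p :=
          mmpe_le_mmpe_prodMk_of_indepFun hX measurable_const (hZ₁.prodMk hZ₂)
            (hXZ.comp (measurable_id.prodMk measurable_const) measurable_id)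
      _ ≤ mmpe μ X (fun ω => (Z₁ ω, Z₂ ω)) p := mmpe_le_mmpe_comp _ measurable_snd
  set r := √(s ^ 2 + t ^ 2)
  set a := s / r
  set b := t / r
  have har : a * r = s := div_mul_cancel₀ _ hr.ne'
  have hbr : b * r = t := div_mul_cancel₀ _ hr.ne'
  have hab : a ^ 2 + b ^ 2 = 1 := by
    rw [div_pow, div_pow, ← add_div, div_eq_one_iff_eq (pow_pos hr 2).ne',
      Real.sq_sqrt (by positivity)]
  set W := fun ω => a * Z₁ ω + b * Z₂ ω
  set V := fun ω => b * Z₁ ω - a * Z₂ ω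
  have hWV : IndepFun W V μ :=
    hZZ.indepFun_add_sub_of_gaussianReal ⟨hZ₁.aemeasurable, hZ₁law⟩ ⟨hZ₂.aemeasurable, hZ₂law⟩ a b
  have hXWV : IndepFun X (fun ω => (W ω, V ω)) μ :=
    hXZ.comp measurable_id (by fun_prop : Measurable fun z : ℝ × ℝ =>
      (a * z.1 + b * z.2, b * z.1 - a * z.2))
  have hXY'V : IndepFun (fun ω => (X ω, r * X ω + W ω)) V μ :=
    (hXWV.prodMk_left_of_indepFun hX (by fun_prop) (by fun_prop) hWV).comp
      (by fun_prop : Measurable fun q : ℝ × ℝ => (q.1, r * q.1 + q.2)) measurable_id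
  have hY' : (fun ω => r * X ω + (s * Z₁ ω + t * Z₂ ω) / r) = fun ω => r * X ω + W ω := by
    funext ω
    ring
  have hpair : (fun ω => (s * X ω + Z₁ ω, t * X ω + Z₂ ω))
      = fun ω => (a * (r * X ω + W ω) + b * V ω, b * (r * X ω + W ω) - a * V ω) := by
    funext ω
    ext
    · linear_combination (-X ω) * har - Z₁ ω * hab
    · linear_combination (-X ω) * hbr - Z₂ ω * hab
  rw [hY', hpair]
  calc mmpe μ X (fun ω => r * X ω + W ω) p
      ≤ mmpe μ X (fun ω => (r * X ω + W ω, V ω)) p :=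
        mmpe_le_mmpe_prodMk_of_indepFun hX (by fun_prop) (by fun_prop) hXY'V
    _ ≤ _ := mmpe_le_mmpe_comp _
        (by fun_prop : Measurable fun q : ℝ × ℝ => (a * q.1 + b * q.2, b * q.1 - a * q.2))

end MaximalRatioCombining

theorem mmpe_extra_observation_and_monotone_general
    {Ω : Type*} [MeasurableSpace Ω] (μ : Measure Ω) [IsProbabilityMeasure μ]
    (X Z ZΔ : Ω → ℝ) (hX : Measurable X) (hZ : Measurable Z) (hZΔ : Measurable ZΔ)
    (hZlaw : μ.map Z = gaussianReal 0 1) (hZΔlaw : μ.map ZΔ = gaussianReal 0 1)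
    (hindep : iIndepFun (m := fun _ : Fin 3 => (inferInstance : MeasurableSpace ℝ))
      ![X, Z, ZΔ] μ)
    (snr₀ Δ : ℝ) (hsnr₀ : 0 ≤ snr₀) (hΔ : 0 ≤ Δ) (p : ℝ)
    (Y₀ U Y' : Ω → ℝ)
    (hY₀ : Y₀ = fun ω => Real.sqrt snr₀ * X ω + Z ω)
    (hU : U = fun ω => Real.sqrt Δ * X ω + ZΔ ω)
    (hY' : Y' = fun ω => Real.sqrt (snr₀ + Δ) * X ω +
      (Real.sqrt snr₀ * Z ω + Real.sqrt Δ * ZΔ ω) / Real.sqrt (snr₀ + Δ)) :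
    (⨅ f : {f : ℝ × ℝ → ℝ // Measurable f},
        ∫⁻ ω, (‖X ω - f.1 (Y₀ ω, U ω)‖₊ : ENNReal) ^ p ∂μ)
      = (⨅ f : {f : ℝ → ℝ // Measurable f},
          ∫⁻ ω, (‖X ω - f.1 (Y' ω)‖₊ : ENNReal) ^ p ∂μ) ∧
    (⨅ f : {f : ℝ → ℝ // Measurable f},
        ∫⁻ ω, (‖X ω - f.1 (Y' ω)‖₊ : ENNReal) ^ p ∂μ)
      ≤ ⨅ f : {f : ℝ → ℝ // Measurable f},
          ∫⁻ ω, (‖X ω - f.1 (Y₀ ω)‖₊ : ENNReal) ^ p ∂μ := by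
  change mmpe μ X (fun ω => (Y₀ ω, U ω)) p = mmpe μ X Y' p ∧ mmpe μ X Y' p ≤ mmpe μ X Y₀ p
  have hmeas : ∀ i, Measurable (![X, Z, ZΔ] i) := fun i => by fin_cases i <;> assumption
  have hXN : IndepFun X (fun ω => (Z ω, ZΔ ω)) μ :=
    (hindep.indepFun_prodMk hmeas 1 2 0 (by decide) (by decide)).symm
  have hZZΔ : IndepFun Z ZΔ μ := hindep.indepFun (show (1 : Fin 3) ≠ 2 by decide)
  have hsq : √snr₀ ^ 2 + √Δ ^ 2 = snr₀ + Δ := by rw [Real.sq_sqrt hsnr₀, Real.sq_sqrt hΔ]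
  have hsplit : mmpe μ X Y' p ≤ mmpe μ X (fun ω => (Y₀ ω, U ω)) p := by
    have := mmpe_maximalRatio_le_mmpe_pair (p := p) hX hZ hZΔ hZlaw hZΔlaw hXN hZZΔ √snr₀ √Δ
    subst hY₀ hU hY'
    simpa only [hsq] using this
  have hcombine : mmpe μ X (fun ω => (Y₀ ω, U ω)) p ≤ mmpe μ X Y' p := by
    have hY'_eq : Y' = fun ω => (√snr₀ * Y₀ ω + √Δ * U ω) / √(snr₀ + Δ) := by
      subst hY₀ hU hY'
      funext ω
      rw [← hsq, maximalRatio_combination]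
    rw [hY'_eq]
    have hφ : Measurable fun q : ℝ × ℝ => (√snr₀ * q.1 + √Δ * q.2) / √(snr₀ + Δ) := by fun_prop
    apply mmpe_le_mmpe_comp _ hφ
  exact ⟨le_antisymm hcombine hsplit, hsplit.trans (mmpe_le_mmpe_comp _ measurable_fst)⟩

/-- **An extra observation is equivalent to a higher SNR, and MMPE is non-increasing in SNR.**
For `U = √Δ·X + Z_Δ` with `Z_Δ ~ N(0,1)` independent of `(X, Z)`, the best `p`-th
error of estimating `X` from `(Y₀, U)` equals `mmpe(X, snr₀ + Δ, p)` (realized via the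
maximal-ratio combination `Y' = √(snr₀+Δ)·X + (√snr₀·Z + √Δ·Z_Δ)/√(snr₀+Δ)`);
in particular `mmpe(X, snr₀ + Δ, p) ≤ mmpe(X, snr₀, p)`. -/
theorem mmpe_extra_observation_and_monotone
    {Ω : Type*} [MeasurableSpace Ω] (μ : Measure Ω) [IsProbabilityMeasure μ]
    (X Z ZΔ : Ω → ℝ) (hX : Measurable X) (hZ : Measurable Z) (hZΔ : Measurable ZΔ)
    (hZlaw : μ.map Z = gaussianReal 0 1) (hZΔlaw : μ.map ZΔ = gaussianReal 0 1)
    (hindep : iIndepFun (m := fun _ : Fin 3 => (inferInstance : MeasurableSpace ℝ))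
      ![X, Z, ZΔ] μ)
    (snr₀ Δ : ℝ) (hsnr₀ : 0 ≤ snr₀) (hΔ : 0 ≤ Δ) (p : ℝ) (hp : 0 < p)
    (Y₀ U Y' : Ω → ℝ)
    (hY₀ : Y₀ = fun ω => Real.sqrt snr₀ * X ω + Z ω)
    (hU : U = fun ω => Real.sqrt Δ * X ω + ZΔ ω)
    (hY' : Y' = fun ω => Real.sqrt (snr₀ + Δ) * X ω +
      (Real.sqrt snr₀ * Z ω + Real.sqrt Δ * ZΔ ω) / Real.sqrt (snr₀ + Δ)) :
    (⨅ f : {f : ℝ × ℝ → ℝ // Measurable f},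
        ∫⁻ ω, (‖X ω - f.1 (Y₀ ω, U ω)‖₊ : ENNReal) ^ p ∂μ)
      = (⨅ f : {f : ℝ → ℝ // Measurable f},
          ∫⁻ ω, (‖X ω - f.1 (Y' ω)‖₊ : ENNReal) ^ p ∂μ) ∧
    (⨅ f : {f : ℝ → ℝ // Measurable f},
        ∫⁻ ω, (‖X ω - f.1 (Y' ω)‖₊ : ENNReal) ^ p ∂μ)
      ≤ ⨅ f : {f : ℝ → ℝ // Measurable f},
          ∫⁻ ω, (‖X ω - f.1 (Y₀ ω)‖₊ : ENNReal) ^ p ∂μ :=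
  mmpe_extra_observation_and_monotone_general μ X Z ZΔ hX hZ hZΔ hZlaw hZΔlaw hindep snr₀ Δ hsnr₀ hΔ
    p Y₀ U Y' hY₀ hU hY'
end
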